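/- arXiv:2209.13784 — 7 statements merged into one kernel-verified Lean document; each statement's English description precedes it below -/
import Mathlib

section
/- For every nonnegative integer n, cp_{1,1,2}(n) = EO*(2n). -/
/-- `(γ, ρ, σ)` is an `(a,b,m)`-copartition. -/
def IsCopartition (a b m : ℕ) (γ ρ σ : Multiset ℕ) : Prop :=
  (∀ x ∈ γ, a ≤ x ∧ x % m = a % m) ∧
  (∀ x ∈ σ, b ≤ x ∧ x % m = b % m) ∧
  ρ = Multiset.replicate (Multiset.card σ) (m * Multiset.card γ)

/-- The set of `(a,b,m)`-copartitions of size `n`. -/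
def cpSet (a b m n : ℕ) : Set (Multiset ℕ × Multiset ℕ × Multiset ℕ) :=
  {t | IsCopartition a b m t.1 t.2.1 t.2.2 ∧ t.1.sum + t.2.1.sum + t.2.2.sum = n}

/-- `cp_{a,b,m}(n)`: the number of `(a,b,m)`-copartitions of size `n`. -/
noncomputable def cp (a b m n : ℕ) : ℕ := (cpSet a b m n).ncard

/-- The largest even part of a partition (0 if there is no even part). -/
def largestEvenPart (lam : Multiset ℕ) : ℕ := (lam.filter (fun x => x % 2 = 0)).sup

/-- The set counted by `EO*(N)`: partitions `λ` of `N` such that every even part of `λ`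
is less than every odd part, every part size other than the largest even part occurs an
even number of times, and if `λ` has an even part then the largest even part occurs an
odd number of times. -/
def EOstarSet (N : ℕ) : Set (Multiset ℕ) :=
  {lam | (∀ x ∈ lam, 0 < x) ∧ lam.sum = N ∧
    (∀ x ∈ lam, ∀ y ∈ lam, Even x → Odd y → x < y) ∧
    (∀ x ∈ lam, x ≠ largestEvenPart lam → Even (lam.count x)) ∧
    ((∃ x ∈ lam, Even x) → Odd (lam.count (largestEvenPart lam)))}

/-- `EO*(N)`. -/
noncomputable def EOstar (N : ℕ) : ℕ := (EOstarSet N).ncard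

/-! The bijection sends a copartition `(γ, ρ, σ)` (`γ`, `σ` with odd parts, `ρ` determined by
them) to the partition whose even parts are twice the parts of the conjugate `γ'` of `γ` and whose
odd parts are the parts of `σ` shifted by `2ν(γ)`, each taken twice. The part `k` of `γ'` occurs
`γ_k - γ_{k+1}` times and the largest part of `γ'` is `ν(γ)`, so `γ` has only odd parts exactly
when every part of `γ'` other than the largest has even multiplicity and the largest has odd
multiplicity: this is the `EO*` condition on the even parts. The even parts lie below `2ν(γ)` and
the odd ones above it, and the sizes match because `|γ'| = |γ|` and the shifted copies of `σ`
contribute `2(|σ| + 2ν(γ)ν(σ))`. -/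

open Multiset

lemma lt_card_filter_range_iff {p : ℕ → Prop} [DecidablePred p] (hp : Antitone p) {N i : ℕ} :
    i < ((Finset.range N).filter p).card ↔ i < N ∧ p i := by
  constructor
  · intro hi
    by_contra hne
    have hsub : (Finset.range N).filter p ⊆ Finset.range i := by
      intro k hk
      simp only [Finset.mem_filter, Finset.mem_range] at hk ⊢
      by_contra hik
      exact hne ⟨by omega, hp (not_lt.1 hik) hk.2⟩
    have := Finset.card_le_card hsub
    simp at this
    omega
  · rintro ⟨hiN, hpi⟩
    have hsub : Finset.range (i + 1) ⊆ (Finset.range N).filter p := by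
      intro k hk
      simp only [Finset.mem_filter, Finset.mem_range] at hk ⊢
      exact ⟨by omega, hp (by omega) hpi⟩
    simpa using Finset.card_le_card hsub

lemma card_filter_range_lt (N a : ℕ) : ((Finset.range N).filter (· < a)).card = min a N :=
  eq_of_forall_lt_iff fun i => by
    rw [lt_card_filter_range_iff fun _ _ hij hj => hij.trans_lt hj, lt_min_iff, and_comm]

lemma exists_eq_add_self_of_even_count (m : Multiset ℕ) (he : ∀ x, Even (m.count x)) :
    ∃ t, m = t + t := by
  refine ⟨∑ a ∈ m.toFinset, (m.count a / 2) • {a}, ?_⟩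
  rw [← two_nsmul, Finset.smul_sum]
  conv_lhs => rw [← toFinset_sum_count_nsmul_eq m]
  refine Finset.sum_congr rfl fun a _ => ?_
  rw [smul_smul, Nat.mul_div_cancel' (even_iff_two_dvd.1 (he a))]

lemma even_sup {s : Multiset ℕ} (h : ∀ x ∈ s, Even x) : Even s.sup := by
  induction s using Multiset.induction with
  | empty => exact Even.zero
  | cons a s ih =>
    rw [sup_cons]
    rcases max_choice a s.sup with hmax | hmax <;> rw [hmax]
    · exact h a (mem_cons_self a s)
    · exact ih fun x hx => h x (mem_cons_of_mem hx)

lemma two_mul_injective : Function.Injective (2 * · : ℕ → ℕ) :=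
  fun _ _ h => by simpa using h

lemma sum_map_add_const (s : Multiset ℕ) (c : ℕ) :
    (s.map (· + c)).sum = s.sum + card s * c := by
  simp [sum_map_add, map_const', sum_replicate]

lemma map_sub_map_add_cancel {s : Multiset ℕ} {c : ℕ} (h : ∀ y ∈ s, c ≤ y) :
    (s.map (· - c)).map (· + c) = s := by
  rw [map_map]
  conv_rhs => rw [← map_id' s]
  exact map_congr rfl fun y hy => Nat.sub_add_cancel (h y hy)

def countGT (h : Multiset ℕ) (j : ℕ) : ℕ := h.countP (j < ·)

def partConj (h : Multiset ℕ) : Multiset ℕ := (range h.sup).map (countGT h)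

lemma countGT_antitone (h : Multiset ℕ) : Antitone (countGT h) := fun i j hij => by
  simp only [countGT, countP_eq_card_filter]
  exact card_le_card (monotone_filter_right h fun x hx => hij.trans_lt hx)

lemma countGT_pos_iff {h : Multiset ℕ} {j : ℕ} : 0 < countGT h j ↔ j < h.sup := by
  simp only [countGT, countP_pos]
  exact ⟨fun ⟨a, ha, hja⟩ => hja.trans_le (le_sup ha),
    fun hj => by by_contra! hc; exact (sup_le.2 hc).not_gt hj⟩

lemma count_succ_add_countGT_succ (h : Multiset ℕ) (j : ℕ) :
    h.count (j + 1) + countGT h (j + 1) = countGT h j := by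
  induction h using Multiset.induction with
  | empty => simp [countGT]
  | cons a h ih =>
    simp only [countGT, count_cons, countP_cons] at ih ⊢
    split_ifs <;> omega

lemma eq_of_countGT_eq {h h' : Multiset ℕ} (hpos : ∀ x ∈ h, 0 < x) (hpos' : ∀ x ∈ h', 0 < x)
    (heq : countGT h = countGT h') : h = h' := by
  ext x
  rcases x with _ | j
  · rw [count_eq_zero.2 fun h0 => (hpos 0 h0).false,
      count_eq_zero.2 fun h0 => (hpos' 0 h0).false]
  · have := count_succ_add_countGT_succ h j
    have := count_succ_add_countGT_succ h' j
    simp only [heq] at *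
    omega

lemma mem_partConj {h : Multiset ℕ} {y : ℕ} :
    y ∈ partConj h ↔ ∃ j < h.sup, countGT h j = y := by
  simp [partConj]

@[simp] lemma card_partConj (h : Multiset ℕ) : card (partConj h) = h.sup := by
  simp [partConj]

lemma pos_of_mem_partConj {h : Multiset ℕ} {y : ℕ} (hy : y ∈ partConj h) : 0 < y := by
  obtain ⟨j, hj, rfl⟩ := mem_partConj.1 hy
  exact countGT_pos_iff.2 hj

lemma le_card_of_mem_partConj {h : Multiset ℕ} {y : ℕ} (hy : y ∈ partConj h) :
    y ≤ card h := by
  obtain ⟨j, -, rfl⟩ := mem_partConj.1 hy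
  exact countP_le_card _ _

-- Both sides say that the cell `(i, j)` lies in the Young diagram of `h`.
lemma lt_countGT_partConj_iff {h : Multiset ℕ} {i j : ℕ} :
    i < countGT (partConj h) j ↔ j < countGT h i := by
  have hcount :
      countGT (partConj h) j = ((Finset.range h.sup).filter (j < countGT h ·)).card := by
    simp only [countGT, partConj, countP_map]
    rfl
  rw [hcount, lt_card_filter_range_iff fun a b hab hb => hb.trans_le (countGT_antitone h hab)]
  exact and_iff_right_of_imp fun hji => countGT_pos_iff.1 (by omega)

lemma countGT_partConj_partConj (h : Multiset ℕ) :
    countGT (partConj (partConj h)) = countGT h :=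
  funext fun i => eq_of_forall_lt_iff fun j => by
    rw [lt_countGT_partConj_iff, lt_countGT_partConj_iff]

lemma partConj_partConj {h : Multiset ℕ} (hpos : ∀ x ∈ h, 0 < x) :
    partConj (partConj h) = h :=
  eq_of_countGT_eq (fun _ => pos_of_mem_partConj) hpos (countGT_partConj_partConj h)

lemma sum_range_countGT (h : Multiset ℕ) (N : ℕ) :
    ∑ j ∈ Finset.range N, countGT h j = (h.map (min · N)).sum := by
  induction h using Multiset.induction with
  | empty => simp [countGT]
  | cons a h ih =>
    simp only [countGT, countP_cons, Finset.sum_add_distrib, Finset.sum_boole, map_cons,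
      sum_cons] at ih ⊢
    rw [ih, card_filter_range_lt, Nat.cast_id, add_comm]

lemma sum_partConj (h : Multiset ℕ) : (partConj h).sum = h.sum := by
  change ∑ j ∈ Finset.range h.sup, countGT h j = h.sum
  rw [sum_range_countGT]
  conv_rhs => rw [← map_id' h]
  exact congrArg sum (map_congr rfl fun x hx => min_eq_left (le_sup hx))

def TopOddOthersEven (D : Multiset ℕ) : Prop :=
  (∀ x ∈ D, x ≠ D.sup → Even (D.count x)) ∧ (D ≠ 0 → Odd (D.count D.sup))

lemma odd_countGT_of_count {D : Multiset ℕ} (htop : Odd (D.count D.sup))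
    (heven : ∀ x ∈ D, x ≠ D.sup → Even (D.count x)) {j : ℕ} (hj : j < D.sup) :
    Odd (countGT D j) := by
  obtain ⟨t, ht⟩ := exists_eq_add_self_of_even_count (D.filter (· ≠ D.sup)) fun x => by
    rw [count_filter]
    split_ifs with hx
    · by_cases hxD : x ∈ D
      · exact heven x hxD hx
      · rw [count_eq_zero.2 hxD]; exact Even.zero
    · exact Even.zero
  have hsplit : countGT D j = D.count D.sup + 2 * countGT t j := by
    conv_lhs => rw [countGT, ← filter_add_not (· = D.sup) D]
    rw [countP_add, filter_eq', ht, countP_add,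
      countP_eq_card.2 fun x hx => (eq_of_mem_replicate hx) ▸ hj, card_replicate, countGT]
    omega
  rw [hsplit]
  exact htop.add_even (even_two_mul _)

lemma odd_partConj_iff {D : Multiset ℕ} (hpos : ∀ x ∈ D, 0 < x) :
    (∀ y ∈ partConj D, Odd y) ↔ TopOddOthersEven D := by
  simp only [TopOddOthersEven, mem_partConj, forall_exists_index, and_imp,
    forall_apply_eq_imp_iff₂]
  constructor
  · intro hodd
    have hcount (k : ℕ) : D.count (k + 1) = countGT D k - countGT D (k + 1) := by
      have := count_succ_add_countGT_succ D k
      omega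
    refine ⟨fun x hx hne => ?_, fun hne => ?_⟩
    · obtain ⟨k, rfl⟩ := Nat.exists_eq_add_one.2 (hpos x hx)
      have hlt : k + 1 < D.sup := lt_of_le_of_ne (le_sup hx) hne
      rw [hcount, Nat.even_sub (countGT_antitone D k.le_succ)]
      exact iff_of_false (Nat.not_even_iff_odd.2 (hodd k (by omega)))
        (Nat.not_even_iff_odd.2 (hodd (k + 1) hlt))
    · obtain ⟨x, hx⟩ := exists_mem_of_ne_zero hne
      obtain ⟨k, hk⟩ := Nat.exists_eq_add_one.2 ((hpos x hx).trans_le (le_sup hx))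
      have hzero : countGT D (k + 1) = 0 := by
        by_contra h0
        have := countGT_pos_iff.1 (Nat.pos_of_ne_zero h0)
        omega
      rw [hk, hcount, hzero, Nat.sub_zero]
      exact hodd k (by omega)
  · rintro ⟨heven, htop⟩ j hj
    have hne : D ≠ 0 := by
      rintro rfl
      simp at hj
    exact odd_countGT_of_count (htop hne) heven hj

def joinEvenOdd (E O : Multiset ℕ) : Multiset ℕ := E.map (2 * ·) + (O + O)

section JoinEvenOdd

variable {E O : Multiset ℕ}

lemma filter_even_joinEvenOdd (hO : ∀ y ∈ O, Odd y) :
    (joinEvenOdd E O).filter (fun x => x % 2 = 0) = E.map (2 * ·) := by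
  have hOodd : O.filter (fun x => x % 2 = 0) = 0 :=
    filter_eq_nil.2 fun y hy => Nat.odd_iff.1 (hO y hy) ▸ one_ne_zero
  rw [joinEvenOdd, filter_add, filter_add, hOodd, add_zero, add_zero, filter_eq_self.2]
  simp

lemma largestEvenPart_joinEvenOdd (hO : ∀ y ∈ O, Odd y) :
    largestEvenPart (joinEvenOdd E O) = 2 * E.sup := by
  rw [largestEvenPart, filter_even_joinEvenOdd hO]
  induction E using Multiset.induction with
  | empty => simp
  | cons a E ih => simp [ih, Nat.mul_max_mul_left]

lemma count_joinEvenOdd_two_mul (hO : ∀ y ∈ O, Odd y) (x : ℕ) :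
    (joinEvenOdd E O).count (2 * x) = E.count x := by
  have hx : O.count (2 * x) = 0 :=
    count_eq_zero.2 fun hx => Nat.not_odd_iff_even.2 (even_two_mul x) (hO _ hx)
  rw [joinEvenOdd, count_add, count_add, hx, count_map_eq_count' _ _ two_mul_injective,
    add_zero, add_zero]

lemma count_joinEvenOdd_of_odd {y : ℕ} (hy : Odd y) :
    (joinEvenOdd E O).count y = 2 * O.count y := by
  have hE : (E.map (2 * ·)).count y = 0 := by
    refine count_eq_zero.2 fun hy' => ?_
    obtain ⟨x, -, rfl⟩ := mem_map.1 hy'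
    exact Nat.not_odd_iff_even.2 (even_two_mul x) hy
  rw [joinEvenOdd, count_add, count_add, hE]
  ring

lemma mem_EOstarSet_joinEvenOdd_iff (hO : ∀ y ∈ O, Odd y) (N : ℕ) :
    joinEvenOdd E O ∈ EOstarSet N ↔
      (∀ x ∈ E, 0 < x) ∧ 2 * E.sum + 2 * O.sum = N ∧ (∀ x ∈ E, ∀ y ∈ O, 2 * x < y) ∧
        TopOddOthersEven E := by
  have hforall {p : ℕ → Prop} :
      (∀ x ∈ joinEvenOdd E O, p x) ↔ (∀ x ∈ E, p (2 * x)) ∧ ∀ y ∈ O, p y := by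
    simp [joinEvenOdd, or_imp, forall_and]
  have hsum : (joinEvenOdd E O).sum = 2 * E.sum + 2 * O.sum := by
    rw [joinEvenOdd, sum_add, sum_add, sum_map_mul_left, map_id']
    ring
  have hodd {y} (hy : y ∈ O) : ¬ Even y := Nat.not_even_iff_odd.2 (hO y hy)
  have hcountO {y} (hy : y ∈ O) : (joinEvenOdd E O).count y = 2 * O.count y :=
    count_joinEvenOdd_of_odd (hO y hy)
  have hnotodd (x : ℕ) : ¬ Odd (2 * x) := Nat.not_odd_iff_even.2 (even_two_mul x)
  have hOpos {y} (hy : y ∈ O) : 0 < y := (hO y hy).pos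
  simp +contextual [EOstarSet, largestEvenPart_joinEvenOdd hO, TopOddOthersEven, hforall, hsum,
    count_joinEvenOdd_two_mul hO, hodd, hcountO, hnotodd, hO, hOpos]
  exact fun _ _ _ _ => ⟨fun h hE => (exists_mem_of_ne_zero hE).elim h,
    fun h x hx => h (by rintro rfl; simp at hx)⟩

lemma exists_eq_joinEvenOdd {L : Multiset ℕ} (hL : ∀ y, Odd y → Even (L.count y)) :
    ∃ E O, (∀ y ∈ O, Odd y) ∧ L = joinEvenOdd E O := by
  obtain ⟨O, hO⟩ := exists_eq_add_self_of_even_count (L.filter (¬ Even ·)) fun y => by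
    rw [count_filter]
    split_ifs with hy
    · exact Even.zero
    · exact hL y (Nat.not_even_iff_odd.1 hy)
  refine ⟨(L.filter Even).map (· / 2), O, fun y hy => ?_, ?_⟩
  · have hy' : y ∈ L.filter (¬ Even ·) := hO ▸ mem_add.2 (Or.inl hy)
    exact Nat.not_even_iff_odd.1 (mem_filter.1 hy').2
  · conv_lhs => rw [← filter_add_not Even L, hO]
    rw [joinEvenOdd, map_map]
    congr 1
    conv_lhs => rw [← map_id' (L.filter Even)]
    exact map_congr rfl fun x hx => (Nat.two_mul_div_two_of_even (mem_filter.1 hx).2).symm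

lemma joinEvenOdd_inj {E E' O O' : Multiset ℕ} (hO : ∀ y ∈ O, Odd y) (hO' : ∀ y ∈ O', Odd y)
    (h : joinEvenOdd E O = joinEvenOdd E' O') : E = E' ∧ O = O' := by
  refine ⟨map_injective two_mul_injective ?_, ?_⟩
  · rw [← filter_even_joinEvenOdd hO, h, filter_even_joinEvenOdd hO']
  · ext y
    rcases Nat.even_or_odd y with hy | hy
    · rw [count_eq_zero.2 fun h => Nat.not_even_iff_odd.2 (hO y h) hy,
        count_eq_zero.2 fun h => Nat.not_even_iff_odd.2 (hO' y h) hy]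
    · have := count_joinEvenOdd_of_odd (E := E) (O := O) hy
      rw [h, count_joinEvenOdd_of_odd hy] at this
      omega

end JoinEvenOdd

lemma odd_of_mem_map_add_two_mul {σ : Multiset ℕ} (hσ : ∀ x ∈ σ, Odd x) (c : ℕ) :
    ∀ y ∈ σ.map (· + 2 * c), Odd y :=
  forall_mem_map_iff.2 fun x hx => (hσ x hx).add_even (even_two_mul c)

lemma mem_cpSet_one_one_two {n : ℕ} {γ ρ σ : Multiset ℕ} :
    (γ, ρ, σ) ∈ cpSet 1 1 2 n ↔ (∀ x ∈ γ, Odd x) ∧ (∀ x ∈ σ, Odd x) ∧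
      ρ = replicate (card σ) (2 * card γ) ∧ γ.sum + σ.sum + card σ * (2 * card γ) = n := by
  have hodd (x : ℕ) : 1 ≤ x ∧ x % 2 = 1 % 2 ↔ Odd x := by
    rw [Nat.odd_iff]; omega
  simp only [cpSet, IsCopartition, Set.mem_ofPred_eq, hodd]
  constructor
  · rintro ⟨⟨hγ, hσ, rfl⟩, hsum⟩
    refine ⟨hγ, hσ, rfl, ?_⟩
    rw [sum_replicate, smul_eq_mul] at hsum
    omega
  · rintro ⟨hγ, hσ, rfl, hsum⟩
    refine ⟨⟨hγ, hσ, rfl⟩, ?_⟩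
    rw [sum_replicate, smul_eq_mul]
    omega

lemma even_count_of_mem_EOstarSet {L : Multiset ℕ} {N : ℕ} (hL : L ∈ EOstarSet N) {y : ℕ}
    (hy : Odd y) : Even (L.count y) := by
  by_cases hyL : y ∈ L
  · refine hL.2.2.2.1 y hyL fun hlep => Nat.not_even_iff_odd.2 hy ?_
    rw [hlep, largestEvenPart]
    exact even_sup fun x hx => Nat.even_iff.2 (mem_filter.1 hx).2
  · rw [count_eq_zero.2 hyL]
    exact Even.zero

def copartitionToEOstar (t : Multiset ℕ × Multiset ℕ × Multiset ℕ) : Multiset ℕ :=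
  joinEvenOdd (partConj t.1) (t.2.2.map (· + 2 * card t.1))

lemma mapsTo_copartitionToEOstar (n : ℕ) :
    Set.MapsTo copartitionToEOstar (cpSet 1 1 2 n) (EOstarSet (2 * n)) := by
  rintro ⟨γ, ρ, σ⟩ ht
  obtain ⟨hγ, hσ, -, hsum⟩ := mem_cpSet_one_one_two.1 ht
  dsimp only [copartitionToEOstar]
  rw [mem_EOstarSet_joinEvenOdd_iff (odd_of_mem_map_add_two_mul hσ _)]
  refine ⟨fun _ => pos_of_mem_partConj, ?_, ?_, ?_⟩
  · rw [sum_partConj, sum_map_add_const]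
    omega
  · intro x hx y hy
    obtain ⟨s, hs, rfl⟩ := mem_map.1 hy
    have := le_card_of_mem_partConj hx
    have := (hσ s hs).pos
    omega
  · have hγpos : ∀ x ∈ γ, 0 < x := fun x hx => (hγ x hx).pos
    rw [← odd_partConj_iff (fun _ => pos_of_mem_partConj), partConj_partConj hγpos]
    exact hγ

lemma injOn_copartitionToEOstar (n : ℕ) : Set.InjOn copartitionToEOstar (cpSet 1 1 2 n) := by
  rintro ⟨γ, ρ, σ⟩ ht ⟨γ', ρ', σ'⟩ ht' h
  obtain ⟨hγ, hσ, rfl, -⟩ := mem_cpSet_one_one_two.1 ht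
  obtain ⟨hγ', hσ', rfl, -⟩ := mem_cpSet_one_one_two.1 ht'
  obtain ⟨hconj, hO⟩ :=
    joinEvenOdd_inj (odd_of_mem_map_add_two_mul hσ _) (odd_of_mem_map_add_two_mul hσ' _) h
  have hγγ' : γ = γ' := by
    rw [← partConj_partConj fun x hx => (hγ x hx).pos, hconj,
      partConj_partConj fun x hx => (hγ' x hx).pos]
  subst hγγ'
  obtain rfl : σ = σ' := map_injective (add_left_injective _) hO
  rfl

lemma surjOn_copartitionToEOstar (n : ℕ) :
    Set.SurjOn copartitionToEOstar (cpSet 1 1 2 n) (EOstarSet (2 * n)) := by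
  intro L hL
  obtain ⟨E, O, hO, rfl⟩ := exists_eq_joinEvenOdd fun y hy => even_count_of_mem_EOstarSet hL hy
  obtain ⟨hEpos, hsum, hlt, htop⟩ := (mem_EOstarSet_joinEvenOdd_iff hO _).1 hL
  have hOgt : ∀ y ∈ O, 2 * E.sup < y := fun y hy => by
    have hsup : E.sup ≤ y / 2 := sup_le.2 fun x hx => by have := hlt x hx y hy; omega
    have := Nat.odd_iff.1 (hO y hy)
    omega
  have hshift := map_sub_map_add_cancel fun y hy => (hOgt y hy).le
  refine ⟨(partConj E, replicate (card O) (2 * E.sup), O.map (· - 2 * E.sup)), ?_, ?_⟩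
  · refine mem_cpSet_one_one_two.2 ⟨(odd_partConj_iff hEpos).2 htop, ?_, by simp, ?_⟩
    · refine forall_mem_map_iff.2 fun y hy => ?_
      exact Nat.Odd.sub_even (hOgt y hy).le (hO y hy) (even_two_mul _)
    · have := sum_map_add_const (O.map (· - 2 * E.sup)) (2 * E.sup)
      rw [hshift] at this
      rw [sum_partConj, card_partConj]
      omega
  · simp only [copartitionToEOstar, partConj_partConj hEpos, card_partConj, hshift]

theorem stmt1 (n : ℕ) : cp 1 1 2 n = EOstar (2 * n) :=
  Set.BijOn.ncard_eq ⟨mapsTo_copartitionToEOstar n, injOn_copartitionToEOstar n,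
    surjOn_copartitionToEOstar n⟩
end

section
/- For all positive integers a, b, m and every nonnegative integer n, the following congruence holds in the polynomial ring ℤ[x,y][q] modulo q^{n+1} (i.e., the coefficients of q^k agree for all k ≤ n): (Σ_{k=0}^{n} Σ_{w,s ≥ 0} cp_{a,b,m}(w,s,k) x^s y^w q^k) · Π_{j=0}^{n} (1 − x q^{b+jm})(1 − y q^{a+jm}) ≡ Π_{j=0}^{n} (1 − x y q^{a+b+jm}) (mod q^{n+1}). (For each fixed k the inner sum over w and s is finite, since cp_{a,b,m}(w,s,k) = 0 whenever aw + bs + msw > k.) -/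
/-- `cp_{a,b,m}(w,s,n)`: the number of `(a,b,m)`-copartitions of size `n` with exactly
`w` ground parts and exactly `s` sky parts. -/
noncomputable def cpWS (a b m w s n : ℕ) : ℕ :=
  {t ∈ cpSet a b m n | Multiset.card t.1 = w ∧ Multiset.card t.2.2 = s}.ncard

/-- Abbreviation for the coefficient ring `ℤ[x,y]`, with `x = X 0`, `y = X 1`. -/
abbrev R2 : Type := MvPolynomial (Fin 2) ℤ

/-- The truncated copartition generating function
`Σ_{k=0}^{n} Σ_{w,s ≥ 0} cp_{a,b,m}(w,s,k) x^s y^w q^k` as an element of `ℤ[x,y][q]`.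
The inner sums over `w, s` are truncated at `k`, which loses nothing since
`cp_{a,b,m}(w,s,k) = 0` whenever `aw + bs + msw > k` (as `a, b ≥ 1`). -/
noncomputable def cpGenFun (a b m n : ℕ) : Polynomial R2 :=
  ∑ i ∈ Finset.range (n + 1), ∑ w ∈ Finset.range (i + 1), ∑ s ∈ Finset.range (i + 1),
    (cpWS a b m w s i : ℕ) •
      (Polynomial.C (MvPolynomial.X 0 ^ s * MvPolynomial.X 1 ^ w) * Polynomial.X ^ i)

/-- `Π_{j=0}^{n} (1 − x q^{b+jm})(1 − y q^{a+jm})` in `ℤ[x,y][q]`. -/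
noncomputable def denomProd (a b m n : ℕ) : Polynomial R2 :=
  ∏ j ∈ Finset.range (n + 1),
    ((1 - Polynomial.C (MvPolynomial.X 0) * Polynomial.X ^ (b + j * m)) *
     (1 - Polynomial.C (MvPolynomial.X 1) * Polynomial.X ^ (a + j * m)))

/-- `Π_{j=0}^{n} (1 − x y q^{a+b+jm})` in `ℤ[x,y][q]`. -/
noncomputable def numerProd (a b m n : ℕ) : Polynomial R2 :=
  ∏ j ∈ Finset.range (n + 1),
    (1 - Polynomial.C (MvPolynomial.X 0 * MvPolynomial.X 1) * Polynomial.X ^ (a + b + j * m))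

/-
Write `F(a, b)` for the generating function `∑ cp_{a,b,m}(w,s,n) x^s y^w q^n`. Sorting
copartitions by whether `a` is a ground part gives `F(a, b) = F(a + m, b) + y q^a F(a, b + m)`:
deleting a ground part `a` lowers every part of `ρ` by `m`, which is undone by raising every sky
part by `m`. Exchanging ground and sky gives `F(a, b) = F(a, b + m) + x q^b F(a + m, b)`.
Together they yield `F(a, b) (1 - x q^b) (1 - y q^a) = F(a + m, b + m) (1 - xy q^{a+b})
(1 - xy q^{a+b+m})`. After `n + 1` iterations the shifted `F` and the surplus factors
`1 - xy q^{a+b+jm}`, `j > n`, are all `≡ 1` modulo `q^{n+1}`.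
-/

open Finset

lemma Multiset.sum_map_add_const (μ : Multiset ℕ) (m : ℕ) :
    (μ.map (· + m)).sum = μ.sum + Multiset.card μ * m := by
  simp [Multiset.sum_map_add]

lemma Multiset.finite_setOf_card_eq_forall_le (w n : ℕ) :
    {μ : Multiset ℕ | Multiset.card μ = w ∧ ∀ x ∈ μ, x ≤ n}.Finite := by
  refine ((Finset.range (n + 1)).sym w).finite_toSet.image ((↑) : Sym ℕ w → Multiset ℕ)
    |>.subset ?_
  rintro μ ⟨rfl, hμ⟩
  exact ⟨⟨μ, rfl⟩, Finset.mem_sym_iff.mpr fun x hx => Finset.mem_range_succ_iff.mpr (hμ x hx), rfl⟩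

lemma Finsupp.single_zero_add_single_one_eq_iff {s w : ℕ} {d : Fin 2 →₀ ℕ} :
    Finsupp.single 0 s + Finsupp.single 1 w = d ↔ s = d 0 ∧ w = d 1 := by
  constructor
  · rintro rfl
    simp
  · rintro ⟨rfl, rfl⟩
    ext i
    fin_cases i <;> simp

lemma Polynomial.coe_finset_prod {R ι : Type*} [CommSemiring R] (s : Finset ι)
    (f : ι → Polynomial R) :
    ((∏ i ∈ s, f i : Polynomial R) : PowerSeries R) = ∏ i ∈ s, (f i : PowerSeries R) :=
  map_prod Polynomial.coeToPowerSeries.ringHom f s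

section TruncatedCongruence

open PowerSeries

variable {R : Type*} [CommRing R] {N : ℕ}

lemma mk_span_X_pow_eq_mk_iff {f g : R⟦X⟧} :
    Ideal.Quotient.mk (Ideal.span {X ^ N}) f = Ideal.Quotient.mk _ g ↔
      ∀ k < N, coeff k f = coeff k g := by
  simp [Ideal.Quotient.eq, Ideal.mem_span_singleton, X_pow_dvd_iff, sub_eq_zero]

lemma mk_span_X_pow_trunc (f : R⟦X⟧) :
    Ideal.Quotient.mk (Ideal.span {X ^ N}) (trunc N f : R⟦X⟧) = Ideal.Quotient.mk _ f :=
  mk_span_X_pow_eq_mk_iff.mpr fun k hk => by rw [Polynomial.coeff_coe, coeff_trunc, if_pos hk]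

lemma mk_span_X_pow_one_sub_C_mul_X_pow {e : ℕ} (c : R) (he : N ≤ e) :
    Ideal.Quotient.mk (Ideal.span {X ^ N}) (1 - C c * X ^ e) = 1 := by
  rw [← map_one (Ideal.Quotient.mk _), mk_span_X_pow_eq_mk_iff]
  intro k hk
  simp [show k ≠ e by omega]

lemma mk_span_X_pow_prod_one_sub_C_mul_X_pow {ι : Type*} (s : Finset ι) (c : ι → R)
    {e : ι → ℕ} (he : ∀ i ∈ s, N ≤ e i) :
    Ideal.Quotient.mk (Ideal.span {X ^ N}) (∏ i ∈ s, (1 - C (c i) * X ^ e i)) = 1 := by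
  rw [map_prod]
  exact prod_eq_one fun i hi => mk_span_X_pow_one_sub_C_mul_X_pow (c i) (he i hi)

end TruncatedCongruence

def PartsInAP (a m : ℕ) (μ : Multiset ℕ) : Prop :=
  ∀ x ∈ μ, a ≤ x ∧ x % m = a % m

section PartsInAP

variable {a m : ℕ} {μ : Multiset ℕ}

lemma PartsInAP.mul_card_le_sum (h : PartsInAP a m μ) : a * Multiset.card μ ≤ μ.sum := by
  simpa [mul_comm] using Multiset.card_nsmul_le_sum fun x hx => (h x hx).1

lemma partsInAP_cons_self : PartsInAP a m (a ::ₘ μ) ↔ PartsInAP a m μ := by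
  simp [PartsInAP]

lemma partsInAP_add_iff (hm : 0 < m) :
    PartsInAP (a + m) m μ ↔ PartsInAP a m μ ∧ a ∉ μ := by
  simp only [PartsInAP, Nat.add_mod_right]
  constructor
  · intro h
    exact ⟨fun x hx => ⟨by grind, (h x hx).2⟩, fun ha => by grind⟩
  · rintro ⟨h, ha⟩ x hx
    obtain ⟨hax, hmod⟩ := h x hx
    have hxa : x ≠ a := by rintro rfl; exact ha hx
    have hdvd : m ∣ x - a := (Nat.modEq_iff_dvd' hax).mp hmod.symm
    have := Nat.le_of_dvd (by omega) hdvd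
    exact ⟨by omega, hmod⟩

lemma partsInAP_map_add_iff : PartsInAP (a + m) m (μ.map (· + m)) ↔ PartsInAP a m μ := by
  simp [PartsInAP, Nat.add_mod_right]

lemma PartsInAP.exists_map_add_eq (h : PartsInAP (a + m) m μ) :
    ∃ ν, PartsInAP a m ν ∧ ν.map (· + m) = μ := by
  have hμ : (μ.map (· - m)).map (· + m) = μ := by
    rw [Multiset.map_map]
    conv_rhs => rw [← Multiset.map_id μ]
    exact Multiset.map_congr rfl fun x hx => by have := (h x hx).1; simp; omega
  refine ⟨_, ?_, hμ⟩
  rwa [← partsInAP_map_add_iff, hμ]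

end PartsInAP

-- A copartition `(γ, ρ, σ)` is determined by `(γ, σ)`, since `ρ = replicate s (m * w)`.
def cpPairs (a b m w s n : ℕ) : Set (Multiset ℕ × Multiset ℕ) :=
  {p | PartsInAP a m p.1 ∧ PartsInAP b m p.2 ∧
    Multiset.card p.1 = w ∧ Multiset.card p.2 = s ∧
    p.1.sum + p.2.sum + m * w * s = n}

section cpPairs

variable {a b m w s n : ℕ}

lemma cpWS_eq_ncard_cpPairs (a b m w s n : ℕ) :
    cpWS a b m w s n = (cpPairs a b m w s n).ncard := by
  refine Set.ncard_congr (fun t _ => (t.1, t.2.2)) ?_ ?_ ?_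
  · rintro ⟨γ, ρ, σ⟩ ⟨⟨⟨hγ, hσ, hρ : ρ = _⟩, hn⟩, rfl, rfl⟩
    dsimp only at hρ hn ⊢
    subst hρ
    refine ⟨hγ, hσ, rfl, rfl, ?_⟩
    simp only [Multiset.sum_replicate, smul_eq_mul] at hn
    linarith [mul_comm (Multiset.card σ) (m * Multiset.card γ)]
  · rintro ⟨γ, ρ, σ⟩ ⟨γ', ρ', σ'⟩ ⟨⟨⟨-, -, hρ : ρ = _⟩, -⟩, -⟩ ⟨⟨⟨-, -, hρ' : ρ' = _⟩, -⟩, -⟩ h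
    simp only [Prod.mk.injEq] at h
    obtain ⟨rfl, rfl⟩ := h
    rw [hρ, hρ']
  · rintro ⟨γ, σ⟩ ⟨hγ, hσ, rfl, rfl, hn⟩
    refine ⟨(γ, Multiset.replicate (Multiset.card σ) (m * Multiset.card γ), σ),
      ⟨⟨⟨hγ, hσ, rfl⟩, ?_⟩, rfl, rfl⟩, rfl⟩
    simp only [Multiset.sum_replicate, smul_eq_mul]
    linarith [mul_comm (Multiset.card σ) (m * Multiset.card γ)]

lemma finite_cpPairs (a b m w s n : ℕ) : (cpPairs a b m w s n).Finite := by
  refine ((Multiset.finite_setOf_card_eq_forall_le w n).prod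
    (Multiset.finite_setOf_card_eq_forall_le s n)).subset ?_
  rintro ⟨γ, σ⟩ ⟨-, -, hw, hs, hn⟩
  exact ⟨⟨hw, fun x hx => by have := Multiset.le_sum_of_mem hx; omega⟩,
    ⟨hs, fun x hx => by have := Multiset.le_sum_of_mem hx; omega⟩⟩

lemma cpWS_comm (a b m w s n : ℕ) : cpWS b a m s w n = cpWS a b m w s n := by
  rw [cpWS_eq_ncard_cpPairs, cpWS_eq_ncard_cpPairs,
    ← Set.ncard_image_of_injective _ Prod.swap_injective]
  congr 1
  ext ⟨γ, σ⟩
  simp only [Set.image_swap_eq_preimage_swap, Set.mem_preimage, Prod.swap_prod_mk, cpPairs,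
    Set.mem_ofPred_eq]
  constructor <;> rintro ⟨h₁, h₂, h₃, h₄, h₅⟩ <;>
    exact ⟨h₂, h₁, h₄, h₃, by linarith [mul_right_comm m s w]⟩

lemma cpWS_eq_zero_of_lt (h : n < a * w + b * s) : cpWS a b m w s n = 0 := by
  rw [cpWS_eq_ncard_cpPairs, Set.ncard_eq_zero (finite_cpPairs a b m w s n)]
  ext ⟨γ, σ⟩
  simp only [cpPairs, Set.mem_ofPred_eq, Set.mem_empty_iff_false, iff_false]
  rintro ⟨hγ, hσ, rfl, rfl, rfl⟩
  linarith [hγ.mul_card_le_sum, hσ.mul_card_le_sum, Nat.zero_le (m * γ.card * σ.card)]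

lemma cpWS_zero_zero (a b m n : ℕ) : cpWS a b m 0 0 n = if n = 0 then 1 else 0 := by
  rw [cpWS_eq_ncard_cpPairs]
  split_ifs with hn
  · subst hn
    rw [Set.ncard_eq_one]
    refine ⟨(0, 0), ?_⟩
    ext ⟨γ, σ⟩
    simp only [cpPairs, Set.mem_ofPred_eq, Multiset.card_eq_zero, Set.mem_singleton_iff,
      Prod.mk.injEq]
    constructor
    · rintro ⟨-, -, rfl, rfl, -⟩
      exact ⟨rfl, rfl⟩
    · rintro ⟨rfl, rfl⟩
      simp [PartsInAP]
  · rw [Set.ncard_eq_zero (finite_cpPairs a b m 0 0 n)]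
    ext ⟨γ, σ⟩
    simp only [cpPairs, Set.mem_ofPred_eq, Multiset.card_eq_zero, Set.mem_empty_iff_false,
      iff_false]
    rintro ⟨-, -, rfl, rfl, rfl⟩
    simp at hn

lemma cpPairs_sdiff_setOf_mem (hm : 0 < m) :
    cpPairs a b m w s n \ {p | a ∈ p.1} = cpPairs (a + m) b m w s n := by
  ext ⟨γ, σ⟩
  simp only [cpPairs, partsInAP_add_iff hm, Set.mem_sdiff, Set.mem_ofPred_eq]
  tauto

lemma ncard_cpPairs_inter_setOf_mem :
    (cpPairs a b m (w + 1) s (n + a) ∩ {p | a ∈ p.1}).ncard = cpWS a (b + m) m w s n := by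
  classical
  rw [cpWS_eq_ncard_cpPairs]
  refine Set.ncard_congr (fun p _ => (p.1.erase a, p.2.map (· + m))) ?_ ?_ ?_
  · rintro ⟨γ, σ⟩ ⟨⟨hγ, hσ, hw, rfl, hn⟩, ha : a ∈ γ⟩
    refine ⟨fun x hx => hγ x (Multiset.mem_of_mem_erase hx), partsInAP_map_add_iff.mpr hσ,
      by simp [Multiset.card_erase_of_mem ha, hw], by simp, ?_⟩
    rw [Multiset.sum_map_add_const, ← Multiset.sum_erase ha] at *
    grind
  · rintro ⟨γ, σ⟩ ⟨γ', σ'⟩ ⟨-, ha : a ∈ γ⟩ ⟨-, ha' : a ∈ γ'⟩ h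
    simp only [Prod.mk.injEq] at h
    rw [← Multiset.cons_erase ha, ← Multiset.cons_erase ha', h.1,
      Multiset.map_injective (add_left_injective m) h.2]
  · rintro ⟨δ, τ⟩ ⟨hδ, hτ, rfl, rfl, hn⟩
    obtain ⟨ν, hν, rfl⟩ := hτ.exists_map_add_eq
    refine ⟨(a ::ₘ δ, ν), ⟨⟨partsInAP_cons_self.mpr hδ, hν, by simp, by simp, ?_⟩,
      Multiset.mem_cons_self a δ⟩, by simp⟩
    simp only [Multiset.sum_map_add_const, Multiset.card_map] at hn
    simp only [Multiset.sum_cons, Multiset.card_map]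
    grind

lemma cpPairs_inter_setOf_mem_eq_empty (h : w = 0 ∨ n < a) :
    cpPairs a b m w s n ∩ {p | a ∈ p.1} = ∅ := by
  ext ⟨γ, σ⟩
  simp only [cpPairs, Set.mem_inter_iff, Set.mem_ofPred_eq, Set.mem_empty_iff_false, iff_false]
  rintro ⟨⟨-, -, rfl, -, hn⟩, ha⟩
  have := Multiset.le_sum_of_mem ha
  rcases h with h | h
  · simp_all
  · omega

lemma cpWS_eq_add_ground (hm : 0 < m) (a b w s k : ℕ) :
    cpWS a b m w s k = cpWS (a + m) b m w s k +
      if a ≤ k ∧ w ≠ 0 then cpWS a (b + m) m (w - 1) s (k - a) else 0 := by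
  rw [cpWS_eq_ncard_cpPairs, cpWS_eq_ncard_cpPairs, ← cpPairs_sdiff_setOf_mem hm,
    ← Set.ncard_inter_add_ncard_sdiff_eq_ncard _ {p | a ∈ p.1} (finite_cpPairs ..), add_comm]
  congr 1
  split_ifs with h
  · obtain ⟨w, rfl⟩ := Nat.exists_eq_succ_of_ne_zero h.2
    obtain ⟨k, rfl⟩ := Nat.exists_eq_add_of_le' h.1
    simpa using ncard_cpPairs_inter_setOf_mem
  · rw [cpPairs_inter_setOf_mem_eq_empty (by omega), Set.ncard_empty]

lemma cpWS_eq_add_sky (hm : 0 < m) (a b w s k : ℕ) :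
    cpWS a b m w s k = cpWS a (b + m) m w s k +
      if b ≤ k ∧ s ≠ 0 then cpWS (a + m) b m w (s - 1) (k - b) else 0 := by
  simpa only [cpWS_comm b a, cpWS_comm (b + m) a, cpWS_comm b (a + m)] using
    cpWS_eq_add_ground hm b a s w k

end cpPairs

noncomputable def cpPoly (a b m k : ℕ) : R2 :=
  ∑ w ∈ range (k + 1), ∑ s ∈ range (k + 1),
    cpWS a b m w s k • (MvPolynomial.X 0 ^ s * MvPolynomial.X 1 ^ w)

noncomputable def cpSeries (a b m : ℕ) : PowerSeries R2 :=
  PowerSeries.mk (cpPoly a b m)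

section cpSeries

variable {a b m k : ℕ}

lemma coeff_cpPoly (ha : 0 < a) (hb : 0 < b) (d : Fin 2 →₀ ℕ) :
    (cpPoly a b m k).coeff d = cpWS a b m (d 1) (d 0) k := by
  have hvanish : ∀ w s, k < w ∨ k < s → cpWS a b m w s k = 0 := fun w s h =>
    cpWS_eq_zero_of_lt (by rcases h with h | h <;> nlinarith)
  simp only [cpPoly, MvPolynomial.coeff_sum, MvPolynomial.X_pow_eq_monomial,
    MvPolynomial.monomial_mul, one_mul, MvPolynomial.coeff_smul, MvPolynomial.coeff_monomial,
    Finsupp.single_zero_add_single_one_eq_iff]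
  rw [sum_eq_single (d 1), sum_eq_single (d 0)]
  · simp
  · intro s _ hs; simp [hs]
  · intro hs; simp [hvanish _ _ (.inr (by simpa using hs))]
  · intro w _ hw; simp [hw]
  · intro hw; simp [hvanish _ _ (.inl (by simpa using hw))]

lemma cpSeries_eq_add_ground (ha : 0 < a) (hb : 0 < b) (hm : 0 < m) :
    cpSeries a b m = cpSeries (a + m) b m +
      PowerSeries.C (MvPolynomial.X 1) * PowerSeries.X ^ a * cpSeries a (b + m) m := by
  ext k d
  rw [map_add, mul_assoc, PowerSeries.coeff_C_mul, PowerSeries.coeff_X_pow_mul', mul_ite,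
    mul_zero, MvPolynomial.coeff_add, apply_ite (MvPolynomial.coeff d), MvPolynomial.coeff_zero,
    MvPolynomial.coeff_X_mul']
  simp only [cpSeries, PowerSeries.coeff_mk, coeff_cpPoly ha hb,
    coeff_cpPoly (ha.trans_le le_self_add) hb, coeff_cpPoly ha (hb.trans_le le_self_add),
    cpWS_eq_add_ground hm a b (d 1) (d 0) k]
  split_ifs <;> simp_all

lemma cpSeries_eq_add_sky (ha : 0 < a) (hb : 0 < b) (hm : 0 < m) :
    cpSeries a b m = cpSeries a (b + m) m +
      PowerSeries.C (MvPolynomial.X 0) * PowerSeries.X ^ b * cpSeries (a + m) b m := by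
  ext k d
  rw [map_add, mul_assoc, PowerSeries.coeff_C_mul, PowerSeries.coeff_X_pow_mul', mul_ite,
    mul_zero, MvPolynomial.coeff_add, apply_ite (MvPolynomial.coeff d), MvPolynomial.coeff_zero,
    MvPolynomial.coeff_X_mul']
  simp only [cpSeries, PowerSeries.coeff_mk, coeff_cpPoly ha hb,
    coeff_cpPoly (ha.trans_le le_self_add) hb, coeff_cpPoly ha (hb.trans_le le_self_add),
    cpWS_eq_add_sky hm a b (d 1) (d 0) k]
  split_ifs <;> simp_all

lemma cpSeries_mul_one_sub_sky (ha : 0 < a) (hb : 0 < b) (hm : 0 < m) :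
    cpSeries a b m * (1 - PowerSeries.C (MvPolynomial.X 0) * PowerSeries.X ^ b) =
      cpSeries a (b + m) m *
        (1 - PowerSeries.C (MvPolynomial.X 0 * MvPolynomial.X 1) * PowerSeries.X ^ (a + b)) := by
  rw [map_mul, pow_add]
  linear_combination cpSeries_eq_add_sky ha hb hm -
    PowerSeries.C (MvPolynomial.X 0) * PowerSeries.X ^ b * cpSeries_eq_add_ground ha hb hm

lemma cpSeries_mul_one_sub_ground (ha : 0 < a) (hb : 0 < b) (hm : 0 < m) :
    cpSeries a b m * (1 - PowerSeries.C (MvPolynomial.X 1) * PowerSeries.X ^ a) =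
      cpSeries (a + m) b m *
        (1 - PowerSeries.C (MvPolynomial.X 0 * MvPolynomial.X 1) * PowerSeries.X ^ (a + b)) := by
  rw [map_mul, pow_add]
  linear_combination cpSeries_eq_add_ground ha hb hm -
    PowerSeries.C (MvPolynomial.X 1) * PowerSeries.X ^ a * cpSeries_eq_add_sky ha hb hm

lemma cpSeries_mul_factors (ha : 0 < a) (hb : 0 < b) (hm : 0 < m) :
    cpSeries a b m * ((1 - PowerSeries.C (MvPolynomial.X 0) * PowerSeries.X ^ b) *
        (1 - PowerSeries.C (MvPolynomial.X 1) * PowerSeries.X ^ a)) =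
      cpSeries (a + m) (b + m) m *
        ((1 - PowerSeries.C (MvPolynomial.X 0 * MvPolynomial.X 1) * PowerSeries.X ^ (a + b)) *
          (1 - PowerSeries.C (MvPolynomial.X 0 * MvPolynomial.X 1) *
            PowerSeries.X ^ (a + b + m))) := by
  rw [← mul_assoc, cpSeries_mul_one_sub_sky ha hb hm, mul_right_comm,
    cpSeries_mul_one_sub_ground ha (hb.trans_le le_self_add) hm, add_assoc a b m]
  ring

lemma cpSeries_mul_prod (ha : 0 < a) (hb : 0 < b) (hm : 0 < m) (t : ℕ) :
    cpSeries a b m * ∏ j ∈ range t,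
        ((1 - PowerSeries.C (MvPolynomial.X 0) * PowerSeries.X ^ (b + j * m)) *
          (1 - PowerSeries.C (MvPolynomial.X 1) * PowerSeries.X ^ (a + j * m))) =
      cpSeries (a + t * m) (b + t * m) m * ∏ j ∈ range (2 * t),
        (1 - PowerSeries.C (MvPolynomial.X 0 * MvPolynomial.X 1) *
          PowerSeries.X ^ (a + b + j * m)) := by
  induction t with
  | zero => simp
  | succ t ih =>
    rw [prod_range_succ, ← mul_assoc, ih, mul_right_comm,
      cpSeries_mul_factors (by omega) (by omega) hm, Nat.mul_succ, prod_range_succ,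
      prod_range_succ, add_one_mul, ← add_assoc a, ← add_assoc b]
    ring

lemma cpPoly_of_lt {k : ℕ} (hka : k < a) (hkb : k < b) :
    cpPoly a b m k = if k = 0 then 1 else 0 := by
  have hvanish : ∀ w s, w ≠ 0 ∨ s ≠ 0 → cpWS a b m w s k = 0 := fun w s h =>
    cpWS_eq_zero_of_lt (by rcases h with h | h <;> nlinarith [Nat.pos_of_ne_zero h])
  rw [cpPoly, sum_eq_single 0 (fun w _ hw => sum_eq_zero fun s _ => by simp [hvanish w s (.inl hw)])
      (by simp), sum_eq_single 0 (fun s _ hs => by simp [hvanish 0 s (.inr hs)]) (by simp),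
    cpWS_zero_zero]
  split_ifs <;> simp

lemma mk_span_X_pow_cpSeries {N : ℕ} (ha : N ≤ a) (hb : N ≤ b) :
    Ideal.Quotient.mk (Ideal.span {PowerSeries.X ^ N}) (cpSeries a b m) = 1 := by
  rw [← map_one (Ideal.Quotient.mk _), mk_span_X_pow_eq_mk_iff]
  intro k hk
  rw [cpSeries, PowerSeries.coeff_mk, cpPoly_of_lt (by omega) (by omega), PowerSeries.coeff_one]

lemma cpGenFun_eq_trunc (a b m n : ℕ) :
    cpGenFun a b m n = PowerSeries.trunc (n + 1) (cpSeries a b m) := by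
  rw [cpGenFun, PowerSeries.trunc_apply, ← range_eq_Ico]
  refine sum_congr rfl fun i _ => ?_
  simp only [cpSeries, PowerSeries.coeff_mk, cpPoly, ← Polynomial.C_mul_X_pow_eq_monomial,
    map_sum, map_nsmul]

end cpSeries

theorem stmt2 (a b m : ℕ) (ha : 0 < a) (hb : 0 < b) (hm : 0 < m) (n : ℕ) :
    ∀ k ≤ n, (cpGenFun a b m n * denomProd a b m n).coeff k = (numerProd a b m n).coeff k := by
  intro k hk
  simp only [← Polynomial.coeff_coe]
  refine mk_span_X_pow_eq_mk_iff.mp ?_ k (Nat.lt_succ_of_le hk)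
  have hfar : ∀ j, n + 1 ≤ a + b + (n + 1 + j) * m := fun j => by nlinarith
  rw [Polynomial.coe_mul, map_mul, cpGenFun_eq_trunc, mk_span_X_pow_trunc, ← map_mul, denomProd,
    numerProd]
  simp only [Polynomial.coe_finset_prod, Polynomial.coe_mul, Polynomial.coe_sub, Polynomial.coe_one,
    Polynomial.coe_pow, Polynomial.coe_C, Polynomial.coe_X]
  rw [cpSeries_mul_prod ha hb hm, map_mul, mk_span_X_pow_cpSeries (by nlinarith) (by nlinarith),
    one_mul, two_mul, prod_range_add, map_mul,
    mk_span_X_pow_prod_one_sub_C_mul_X_pow _ _ fun j _ => hfar j, mul_one]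
end

section
/- For all positive integers a, b, m and every nonnegative integer n, the following congruence holds in ℤ[q] modulo q^{n+1} (i.e., the coefficients of q^k agree for all k ≤ n): (Σ_{k=0}^{n} (cp^e_{a,b,m}(k) − cp^o_{a,b,m}(k)) q^k) · Π_{j=0}^{n} (1 + q^{a+jm})(1 − q^{b+jm}) ≡ Π_{j=0}^{n} (1 + q^{a+b+jm}) (mod q^{n+1}). -/
/-- `cp^o_{a,b,m}(n)`. -/
noncomputable def cpOdd (a b m n : ℕ) : ℕ :=
  {t ∈ cpSet a b m n | Odd (Multiset.card t.1)}.ncard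

/-- `cp^e_{a,b,m}(n)`. -/
noncomputable def cpEven (a b m n : ℕ) : ℕ :=
  {t ∈ cpSet a b m n | Even (Multiset.card t.1)}.ncard

/-- `Σ_{k=0}^{n} (cp^e_{a,b,m}(k) − cp^o_{a,b,m}(k)) q^k` in `ℤ[q]`. -/
noncomputable def cpDiffPoly (a b m n : ℕ) : Polynomial ℤ :=
  ∑ k ∈ Finset.range (n + 1),
    Polynomial.C ((cpEven a b m k : ℤ) - (cpOdd a b m k : ℤ)) * Polynomial.X ^ k

/-- `Π_{j=0}^{n} (1 + q^{a+jm})(1 − q^{b+jm})` in `ℤ[q]`. -/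
noncomputable def denomProdZ (a b m n : ℕ) : Polynomial ℤ :=
  ∏ j ∈ Finset.range (n + 1),
    ((1 + Polynomial.X ^ (a + j * m)) * (1 - Polynomial.X ^ (b + j * m)))

/-- `Π_{j=0}^{n} (1 + q^{a+b+jm})` in `ℤ[q]`. -/
noncomputable def numerProdZ (a b m n : ℕ) : Polynomial ℤ :=
  ∏ j ∈ Finset.range (n + 1), (1 + Polynomial.X ^ (a + b + j * m))


/-!
Encode a copartition of size at most `n` by the multiplicities `f` and `g` of the parts
`a + j m` of `γ` and `b + j m` of `σ`, and compute in a commutative ring with `x ^ (n + 1) = 0`.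
Summing `(-1)^ν(γ) x^size` over `f` for fixed `g` gives `x^|σ| / (-x^(a + ν(σ) m); x^m)_(n+1)`,
so after multiplying by `(-x^a; x^m)_(n+1)` the left side becomes
`G(b) = Σ_g x^|σ| (-x^a; x^m)_ν(σ)`. Splitting off the multiplicity of the smallest part `b`
yields `(1 - x^b) G(b) = (1 + x^(a+b)) G(b + m)`, and iterating this `n + 1` times reaches
`G(b + (n+1) m) = 1`: this is the `q`-binomial theorem for `(-x^a; x^m)_∞ / (x^b; x^m)_∞`.
-/

open Polynomial Finset

namespace Copartition

section Multiplicities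

variable {n N : ℕ}

def numParts (g : Fin N → Fin (n + 1)) : ℕ := ∑ j, (g j : ℕ)

def partSum (c m : ℕ) (g : Fin N → Fin (n + 1)) : ℕ := ∑ j, (g j : ℕ) * (c + j * m)

lemma partSum_add_left (c d m : ℕ) (g : Fin N → Fin (n + 1)) :
    partSum (c + d) m g = partSum c m g + numParts g * d := by
  simp only [partSum, numParts, sum_mul, ← sum_add_distrib]
  exact sum_congr rfl fun j _ => by ring

lemma numParts_cons (k : Fin (n + 1)) (t : Fin N → Fin (n + 1)) :
    numParts (Fin.cons k t : Fin (N + 1) → Fin (n + 1)) = k + numParts t := by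
  simp [numParts, Fin.sum_univ_succ]

lemma partSum_cons (c m : ℕ) (k : Fin (n + 1)) (t : Fin N → Fin (n + 1)) :
    partSum c m (Fin.cons k t : Fin (N + 1) → Fin (n + 1)) = k * c + partSum (c + m) m t := by
  simp only [partSum, Fin.sum_univ_succ, Fin.cons_zero, Fin.cons_succ, Fin.val_zero, Fin.val_succ]
  congr 1
  · ring
  · exact sum_congr rfl fun j _ => by ring

lemma numParts_snoc (t : Fin N → Fin (n + 1)) (v : Fin (n + 1)) :
    numParts (Fin.snoc t v : Fin (N + 1) → Fin (n + 1)) = numParts t + v := by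
  simp [numParts, Fin.sum_univ_castSucc]

lemma partSum_snoc (c m : ℕ) (t : Fin N → Fin (n + 1)) (v : Fin (n + 1)) :
    partSum c m (Fin.snoc t v : Fin (N + 1) → Fin (n + 1)) = partSum c m t + v * (c + N * m) := by
  simp [partSum, Fin.sum_univ_castSucc]

lemma le_partSum_of_ne_zero (c m : ℕ) {g : Fin N → Fin (n + 1)} (hg : g ≠ 0) :
    c ≤ partSum c m g := by
  obtain ⟨j, hj⟩ := Function.ne_iff.1 hg
  have hj : 1 ≤ (g j : ℕ) := Nat.one_le_iff_ne_zero.2 (Fin.val_ne_iff.2 hj)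
  calc c ≤ c + j * m := Nat.le_add_right _ _
    _ ≤ (g j : ℕ) * (c + j * m) := Nat.le_mul_of_pos_left _ hj
    _ ≤ partSum c m g :=
      single_le_sum (f := fun j => (g j : ℕ) * (c + j * m)) (fun _ _ => Nat.zero_le _) (mem_univ j)

end Multiplicities

section Nilpotent

variable {R : Type*} [CommRing R] {x : R} {n : ℕ}

/-- `pochAdd x c m N` and `pochSub x c m N` are the `q`-Pochhammer symbols `(-x^c; x^m)_N` and
`(x^c; x^m)_N`. -/
def pochAdd (x : R) (c m N : ℕ) : R := ∏ j ∈ range N, (1 + x ^ (c + j * m))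

def pochSub (x : R) (c m N : ℕ) : R := ∏ j ∈ range N, (1 - x ^ (c + j * m))

lemma pochAdd_succ (c m N : ℕ) : pochAdd x c m (N + 1) = pochAdd x c m N * (1 + x ^ (c + N * m)) :=
  prod_range_succ _ _

lemma pochSub_succ (c m N : ℕ) : pochSub x c m (N + 1) = pochSub x c m N * (1 - x ^ (c + N * m)) :=
  prod_range_succ _ _

lemma pochAdd_add (c m s t : ℕ) :
    pochAdd x c m (s + t) = pochAdd x c m s * pochAdd x (c + s * m) m t := by
  rw [pochAdd, prod_range_add]
  congr 1
  exact prod_congr rfl fun j _ => by ring_nf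

lemma pochAdd_eq_one (hx : x ^ (n + 1) = 0) {c : ℕ} (hc : n + 1 ≤ c) (m N : ℕ) :
    pochAdd x c m N = 1 :=
  prod_eq_one fun j _ => by rw [pow_eq_zero_of_le (by omega) hx, add_zero]

lemma pochAdd_eq_mul_pochAdd (hx : x ^ (n + 1) = 0) {m : ℕ} (hm : 0 < m) (c s : ℕ) :
    pochAdd x c m (n + 1) = pochAdd x c m s * pochAdd x (c + s * m) m (n + 1) := by
  calc pochAdd x c m (n + 1) = pochAdd x c m (n + 1) * pochAdd x (c + (n + 1) * m) m s := by
        rw [pochAdd_eq_one hx (c := c + (n + 1) * m) (by nlinarith), mul_one]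
    _ = pochAdd x c m s * pochAdd x (c + s * m) m (n + 1) := by
        rw [← pochAdd_add, add_comm, pochAdd_add]

lemma geom_sum_neg_mul_one_add {y : R} (hy : y ^ (n + 1) = 0) :
    (∑ k ∈ range (n + 1), (-y) ^ k) * (1 + y) = 1 := by
  have h := geom_sum_mul_neg (-y) (n + 1)
  rwa [sub_neg_eq_add, neg_pow, hy, mul_zero, sub_zero] at h

lemma sum_neg_one_pow_mul_pochAdd (hx : x ^ (n + 1) = 0) {c : ℕ} (hc : 0 < c) (m N : ℕ) :
    (∑ f : Fin N → Fin (n + 1), (-1) ^ numParts f * x ^ partSum c m f) * pochAdd x c m N = 1 := by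
  have hterm : ∀ f : Fin N → Fin (n + 1),
      (-1) ^ numParts f * x ^ partSum c m f = ∏ j : Fin N, (-x ^ (c + (j : ℕ) * m)) ^ (f j : ℕ) :=
    fun f => by
    rw [numParts, partSum, ← prod_pow_eq_pow_sum, ← prod_pow_eq_pow_sum, ← prod_mul_distrib]
    exact prod_congr rfl fun j _ => by rw [neg_pow (x ^ _), ← pow_mul]; ring
  rw [Fintype.sum_congr _ _ hterm,
    ← Fintype.prod_sum fun (j : Fin N) (k : Fin (n + 1)) => (-x ^ (c + (j : ℕ) * m)) ^ (k : ℕ),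
    pochAdd, ← Fin.prod_univ_eq_prod_range, ← prod_mul_distrib]
  refine prod_eq_one fun j _ => ?_
  rw [Fin.sum_univ_eq_sum_range (fun k => (-x ^ (c + j * m)) ^ k)]
  refine geom_sum_neg_mul_one_add ?_
  rw [← pow_mul]
  exact pow_eq_zero_of_le (Nat.le_mul_of_pos_left _ (by omega)) hx

/-- With `w = pochAdd x a m` and `N = n + 1` this is `Σ_s (-x^a; x^m)_s x^(c s) / (x^m; x^m)_s`
modulo `x ^ (n + 1)`. -/
def partGen (x : R) (n m c : ℕ) (w : ℕ → R) (N : ℕ) : R :=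
  ∑ g : Fin N → Fin (n + 1), x ^ partSum c m g * w (numParts g)

variable {m : ℕ}

lemma partGen_succ (c : ℕ) (w : ℕ → R) (N : ℕ) :
    partGen x n m c w (N + 1) =
      ∑ k ∈ range (n + 1), x ^ (k * c) * partGen x n m (c + m) (fun s => w (k + s)) N := by
  rw [partGen, ← (Fin.consEquiv fun _ => Fin (n + 1)).sum_comp, Fintype.sum_prod_type,
    ← Fin.sum_univ_eq_sum_range fun k => x ^ (k * c) * partGen x n m (c + m) (fun s => w (k + s)) N]
  refine Fintype.sum_congr _ _ fun k => ?_
  rw [partGen, mul_sum]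
  refine Fintype.sum_congr _ _ fun t => ?_
  change x ^ partSum c m (Fin.cons k t : Fin (N + 1) → Fin (n + 1)) *
    w (numParts (Fin.cons k t)) = _
  rw [partSum_cons, numParts_cons, pow_add, mul_assoc]

lemma partGen_succ_of_le (hx : x ^ (n + 1) = 0) {c N : ℕ} (h : n + 1 ≤ c + N * m) (w : ℕ → R) :
    partGen x n m c w (N + 1) = partGen x n m c w N := by
  rw [partGen, ← (Fin.snocEquiv fun _ => Fin (n + 1)).sum_comp, Fintype.sum_prod_type,
    Fintype.sum_eq_single 0]
  · refine Fintype.sum_congr _ _ fun t => ?_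
    change x ^ partSum c m (Fin.snoc t 0 : Fin (N + 1) → Fin (n + 1)) *
      w (numParts (Fin.snoc t 0)) = _
    simp [partSum_snoc, numParts_snoc]
  · intro v hv
    refine sum_eq_zero fun t _ => ?_
    change x ^ partSum c m (Fin.snoc t v : Fin (N + 1) → Fin (n + 1)) * _ = 0
    have hv : 1 ≤ (v : ℕ) := Nat.one_le_iff_ne_zero.2 (Fin.val_ne_iff.2 hv)
    rw [partSum_snoc, pow_eq_zero_of_le (by nlinarith) hx, zero_mul]

/-- Split off the multiplicity `k` of the smallest part `c`: the terms with `k ≥ 1` form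
`x ^ c` times the same sum with `w` shifted, and those with `k = 0` involve only larger parts. -/
lemma partGen_succ_eq (hx : x ^ (n + 1) = 0) {c : ℕ} (hc : 0 < c) (w : ℕ → R) (N : ℕ) :
    partGen x n m c w (N + 1) =
      x ^ c * partGen x n m c (fun s => w (s + 1)) (N + 1) + partGen x n m (c + m) w N := by
  set φ : ℕ → R := fun k => x ^ (k * c) * partGen x n m (c + m) (fun s => w (k + s)) N
  have hshift : x ^ c * partGen x n m c (fun s => w (s + 1)) (N + 1) =
      ∑ k ∈ range (n + 1), φ (k + 1) := by
    rw [partGen_succ, mul_sum]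
    refine sum_congr rfl fun k _ => ?_
    simp only [φ, add_right_comm k, ← mul_assoc, ← pow_add, add_one_mul, add_comm c]
  have hlast : φ (n + 1) = 0 := by
    simp only [φ, pow_eq_zero_of_le (n := (n + 1) * c) (by nlinarith) hx, zero_mul]
  rw [hshift, partGen_succ, sum_range_succ', sum_range_succ, hlast, add_zero]
  simp [φ]

lemma partGen_pochAdd_succ (a c N : ℕ) :
    partGen x n m c (fun s => pochAdd x a m (s + 1)) N =
      partGen x n m c (pochAdd x a m) N + x ^ a * partGen x n m (c + m) (pochAdd x a m) N := by
  simp only [partGen, pochAdd_succ, mul_sum, ← sum_add_distrib, partSum_add_left]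
  exact Fintype.sum_congr _ _ fun g => by ring

lemma one_sub_pow_mul_partGen (hx : x ^ (n + 1) = 0) {c N : ℕ} (hc : 0 < c) (hm : 0 < m)
    (hN : n ≤ N) (a : ℕ) :
    (1 - x ^ c) * partGen x n m c (pochAdd x a m) (N + 1) =
      (1 + x ^ (a + c)) * partGen x n m (c + m) (pochAdd x a m) (N + 1) := by
  have h := partGen_succ_eq (m := m) hx hc (pochAdd x a m) N
  rw [partGen_pochAdd_succ, ← partGen_succ_of_le hx (c := c + m) (N := N) (by nlinarith)] at h
  linear_combination h

lemma pochSub_mul_partGen (hx : x ^ (n + 1) = 0) {c N : ℕ} (hc : 0 < c) (hm : 0 < m)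
    (hN : n ≤ N) (a r : ℕ) :
    pochSub x c m r * partGen x n m c (pochAdd x a m) (N + 1) =
      pochAdd x (a + c) m r * partGen x n m (c + r * m) (pochAdd x a m) (N + 1) := by
  induction r with
  | zero => simp [pochSub, pochAdd]
  | succ r ih =>
    have h := one_sub_pow_mul_partGen hx (c := c + r * m) (by omega) hm hN a
    rw [pochSub_succ, pochAdd_succ, show c + (r + 1) * m = c + r * m + m by ring]
    linear_combination (1 - x ^ (c + r * m)) * ih + pochAdd x (a + c) m r * h

lemma partGen_eq_one (hx : x ^ (n + 1) = 0) {c : ℕ} (hc : n + 1 ≤ c) {w : ℕ → R} (hw : w 0 = 1)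
    (N : ℕ) : partGen x n m c w N = 1 := by
  rw [partGen, Fintype.sum_eq_single 0]
  · simp [partSum, numParts, hw]
  · intro g hg
    rw [pow_eq_zero_of_le (hc.trans (le_partSum_of_ne_zero c m hg)) hx, zero_mul]

theorem pochSub_mul_partGen_pochAdd (hx : x ^ (n + 1) = 0) {b N : ℕ} (hb : 0 < b) (hm : 0 < m)
    (hN : n ≤ N) (a : ℕ) :
    pochSub x b m (n + 1) * partGen x n m b (pochAdd x a m) (N + 1) =
      pochAdd x (a + b) m (n + 1) := by
  rw [pochSub_mul_partGen hx hb hm hN, partGen_eq_one hx (by nlinarith) (by simp [pochAdd]),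
    mul_one]

end Nilpotent

section Encoding

variable {n N : ℕ}

def toMultiset (c m : ℕ) (g : Fin N → Fin (n + 1)) : Multiset ℕ :=
  ∑ j, Multiset.replicate (g j) (c + j * m)

lemma card_toMultiset (c m : ℕ) (g : Fin N → Fin (n + 1)) :
    Multiset.card (toMultiset c m g) = numParts g := by
  simp [toMultiset, numParts]

lemma sum_toMultiset (c m : ℕ) (g : Fin N → Fin (n + 1)) :
    (toMultiset c m g).sum = partSum c m g := by
  simp [toMultiset, partSum, Multiset.sum_sum]

lemma exists_eq_of_mem_toMultiset {c m y : ℕ} {g : Fin N → Fin (n + 1)}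
    (hy : y ∈ toMultiset c m g) : ∃ j : Fin N, y = c + j * m := by
  obtain ⟨j, -, hj⟩ := Multiset.mem_sum.1 hy
  exact ⟨j, Multiset.eq_of_mem_replicate hj⟩

lemma le_and_mod_eq_of_mem_toMultiset {c m y : ℕ} {g : Fin N → Fin (n + 1)}
    (hy : y ∈ toMultiset c m g) : c ≤ y ∧ y % m = c % m := by
  obtain ⟨j, rfl⟩ := exists_eq_of_mem_toMultiset hy
  exact ⟨Nat.le_add_right _ _, Nat.add_mul_mod_self_right _ _ _⟩

lemma count_toMultiset (c : ℕ) {m : ℕ} (hm : 0 < m) (g : Fin N → Fin (n + 1)) (j : Fin N) :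
    (toMultiset c m g).count (c + j * m) = g j := by
  rw [toMultiset, Multiset.count_sum', sum_eq_single j]
  · simp
  · intro i _ hij
    rw [Multiset.count_replicate, if_neg]
    intro h
    exact hij (Fin.ext (Nat.eq_of_mul_eq_mul_right hm (by omega)))
  · simp

lemma toMultiset_injective (c : ℕ) {m : ℕ} (hm : 0 < m) :
    Function.Injective (toMultiset (n := n) (N := N) c m) := fun g g' h =>
  funext fun j => Fin.ext (by rw [← count_toMultiset c hm g j, h, count_toMultiset c hm])

lemma exists_toMultiset_eq {c m : ℕ} (hc : 0 < c) (hm : 0 < m) {γ : Multiset ℕ}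
    (hγ : ∀ y ∈ γ, c ≤ y ∧ y % m = c % m) (hsum : γ.sum ≤ n) :
    ∃ g : Fin (n + 1) → Fin (n + 1), toMultiset c m g = γ := by
  have hcard : Multiset.card γ ≤ n := by
    have := Multiset.card_nsmul_le_sum (a := 1) fun y hy => hc.trans_le (hγ y hy).1
    rw [smul_eq_mul, mul_one] at this
    omega
  have hcount (y : ℕ) : γ.count y < n + 1 :=
    Nat.lt_succ_of_le ((Multiset.count_le_card y γ).trans hcard)
  have hindex {y : ℕ} (hy : y ∈ γ) : ∃ j : Fin (n + 1), y = c + j * m := by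
    obtain ⟨hcy, hmod⟩ := hγ y hy
    obtain ⟨j, hj⟩ := Nat.dvd_of_mod_eq_zero (Nat.sub_mod_eq_zero_of_mod_eq hmod)
    have : j ≤ n := by
      have := Multiset.le_sum_of_mem hy
      have := Nat.le_mul_of_pos_left j hm
      omega
    exact ⟨⟨j, Nat.lt_succ_of_le this⟩, by simp only; rw [mul_comm] at hj; omega⟩
  refine ⟨fun j => ⟨γ.count (c + j * m), hcount _⟩, Multiset.ext.2 fun y => ?_⟩
  by_cases hy : y ∈ γ
  · obtain ⟨j, rfl⟩ := hindex hy
    exact count_toMultiset c hm _ j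
  · rw [Multiset.count_eq_zero.2 hy, Multiset.count_eq_zero]
    intro hy'
    obtain ⟨j, rfl⟩ := exists_eq_of_mem_toMultiset hy'
    rw [← Multiset.count_pos, count_toMultiset c hm] at hy'
    exact hy (Multiset.count_pos.1 hy')

abbrev MultPair (n : ℕ) : Type := (Fin (n + 1) → Fin (n + 1)) × (Fin (n + 1) → Fin (n + 1))

def toCopartition (a b m : ℕ) (p : MultPair n) : Multiset ℕ × Multiset ℕ × Multiset ℕ :=
  (toMultiset a m p.1, Multiset.replicate (numParts p.2) (m * numParts p.1), toMultiset b m p.2)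

def copartSize (a b m : ℕ) (p : MultPair n) : ℕ :=
  partSum a m p.1 + numParts p.2 * (m * numParts p.1) + partSum b m p.2

lemma toCopartition_injective (a b : ℕ) {m : ℕ} (hm : 0 < m) :
    Function.Injective (toCopartition (n := n) a b m) := fun p q h => by
  simp only [toCopartition, Prod.mk.injEq] at h
  exact Prod.ext (toMultiset_injective a hm h.1) (toMultiset_injective b hm h.2.2)

lemma cpSet_eq_image {a b m k : ℕ} (ha : 0 < a) (hb : 0 < b) (hm : 0 < m) (hk : k ≤ n) :
    cpSet a b m k = toCopartition a b m '' {p : MultPair n | copartSize a b m p = k} := by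
  ext ⟨γ, ρ, σ⟩
  constructor
  · rintro ⟨⟨hγ, hσ, hρ⟩, hsize⟩
    dsimp only at hγ hσ hρ hsize
    subst hρ
    obtain ⟨f, rfl⟩ := exists_toMultiset_eq (n := n) ha hm hγ (by omega)
    obtain ⟨g, rfl⟩ := exists_toMultiset_eq (n := n) hb hm hσ (by omega)
    refine ⟨(f, g), ?_, ?_⟩
    · simpa [copartSize, card_toMultiset, sum_toMultiset] using hsize
    · simp [toCopartition, card_toMultiset]
  · rintro ⟨⟨f, g⟩, hsize, heq⟩
    simp only [toCopartition, Prod.mk.injEq] at heq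
    obtain ⟨rfl, rfl, rfl⟩ := heq
    refine ⟨⟨fun y => le_and_mod_eq_of_mem_toMultiset, fun y => le_and_mod_eq_of_mem_toMultiset,
      by simp [card_toMultiset]⟩, ?_⟩
    simpa [copartSize, sum_toMultiset] using hsize

lemma ncard_cpSet_filter {a b m k : ℕ} (ha : 0 < a) (hb : 0 < b) (hm : 0 < m) (hk : k ≤ n)
    (Q : ℕ → Prop) [DecidablePred Q] :
    {t ∈ cpSet a b m k | Q (Multiset.card t.1)}.ncard =
      #{p : MultPair n | copartSize a b m p = k ∧ Q (numParts p.1)} := by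
  rw [cpSet_eq_image (n := n) ha hb hm hk, ← Set.ncard_coe_finset,
    ← Set.ncard_image_of_injective _ (toCopartition_injective a b hm)]
  congr 1
  ext t
  simp only [Set.mem_image, Set.mem_ofPred_eq, coe_filter, mem_univ, true_and]
  constructor
  · rintro ⟨⟨p, hp, rfl⟩, hQ⟩
    exact ⟨p, ⟨hp, by simpa [toCopartition, card_toMultiset] using hQ⟩, rfl⟩
  · rintro ⟨p, ⟨hp, hQ⟩, rfl⟩
    exact ⟨⟨p, hp, rfl⟩, by simpa [toCopartition, card_toMultiset] using hQ⟩

lemma cpEven_sub_cpOdd {a b m k : ℕ} (ha : 0 < a) (hb : 0 < b) (hm : 0 < m) (hk : k ≤ n) :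
    (cpEven a b m k : ℤ) - cpOdd a b m k =
      ∑ p : MultPair n with copartSize a b m p = k, (-1) ^ numParts p.1 := by
  simp only [cpEven, cpOdd, ncard_cpSet_filter (n := n) ha hb hm hk, neg_one_pow_eq_ite, sum_ite,
    sum_const, filter_filter, Nat.not_even_iff_odd]
  simp [sub_eq_add_neg]

end Encoding

section Assembly

variable {R : Type*} [CommRing R] {x : R} {n : ℕ}

lemma aeval_cpDiffPoly (hx : x ^ (n + 1) = 0) {a b m : ℕ} (ha : 0 < a) (hb : 0 < b) (hm : 0 < m) :
    aeval x (cpDiffPoly a b m n) =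
      ∑ p : MultPair n, (-1) ^ numParts p.1 * x ^ copartSize a b m p := by
  calc aeval x (cpDiffPoly a b m n)
      = ∑ k ∈ range (n + 1), ∑ p : MultPair n with copartSize a b m p = k,
          (-1) ^ numParts p.1 * x ^ copartSize a b m p := by
        rw [cpDiffPoly, map_sum]
        refine sum_congr rfl fun k hk => ?_
        rw [map_mul, map_pow, aeval_C, aeval_X, algebraMap_int_eq, eq_intCast,
          cpEven_sub_cpOdd ha hb hm (Nat.lt_succ_iff.1 (mem_range.1 hk)), Int.cast_sum, sum_mul]
        refine sum_congr rfl fun p hp => ?_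
        rw [(mem_filter.1 hp).2]
        push_cast
        rfl
    _ = ∑ p : MultPair n with copartSize a b m p ∈ range (n + 1),
          (-1) ^ numParts p.1 * x ^ copartSize a b m p := sum_fiberwise_eq_sum_filter _ _ _ _
    _ = _ := sum_filter_of_ne fun p _ hp => by
        by_contra h
        rw [mem_range, not_lt] at h
        exact hp (by rw [pow_eq_zero_of_le h hx, mul_zero])

lemma sum_neg_one_pow_copartSize_mul_pochAdd (hx : x ^ (n + 1) = 0) {a : ℕ} (ha : 0 < a)
    (b : ℕ) {m : ℕ} (hm : 0 < m) (g : Fin (n + 1) → Fin (n + 1)) :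
    (∑ f, (-1) ^ numParts f * x ^ copartSize a b m (f, g)) * pochAdd x a m (n + 1) =
      x ^ partSum b m g * pochAdd x a m (numParts g) := by
  have hsize (f : Fin (n + 1) → Fin (n + 1)) :
      copartSize a b m (f, g) = partSum (a + numParts g * m) m f + partSum b m g := by
    rw [copartSize, partSum_add_left]
    ring
  simp only [hsize, pow_add, ← mul_assoc, ← sum_mul]
  rw [pochAdd_eq_mul_pochAdd hx hm a (numParts g)]
  linear_combination (x ^ partSum b m g * pochAdd x a m (numParts g)) *
    sum_neg_one_pow_mul_pochAdd hx (c := a + numParts g * m) (by omega) m (n + 1)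

theorem aeval_cpDiffPoly_mul_denomProdZ (hx : x ^ (n + 1) = 0) {a b m : ℕ} (ha : 0 < a)
    (hb : 0 < b) (hm : 0 < m) :
    aeval x (cpDiffPoly a b m n * denomProdZ a b m n) = aeval x (numerProdZ a b m n) := by
  have hden : aeval x (denomProdZ a b m n) = pochAdd x a m (n + 1) * pochSub x b m (n + 1) := by
    simp [denomProdZ, pochAdd, pochSub, prod_mul_distrib]
  have hnum : aeval x (numerProdZ a b m n) = pochAdd x (a + b) m (n + 1) := by
    simp [numerProdZ, pochAdd]
  have hsum : aeval x (cpDiffPoly a b m n) * pochAdd x a m (n + 1) =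
      partGen x n m b (pochAdd x a m) (n + 1) := by
    rw [aeval_cpDiffPoly hx ha hb hm, Fintype.sum_prod_type, sum_comm, sum_mul]
    exact Fintype.sum_congr _ _ (sum_neg_one_pow_copartSize_mul_pochAdd hx ha b hm)
  rw [map_mul, hden, hnum, ← mul_assoc, hsum, mul_comm, pochSub_mul_partGen_pochAdd hx hb hm le_rfl]

end Assembly

end Copartition

open Copartition in
theorem stmt3 (a b m : ℕ) (ha : 0 < a) (hb : 0 < b) (hm : 0 < m) (n : ℕ) :
    ∀ k ≤ n, (cpDiffPoly a b m n * denomProdZ a b m n).coeff k = (numerProdZ a b m n).coeff k := by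
  set I := Ideal.span {(X : ℤ[X]) ^ (n + 1)}
  have hmk (p : ℤ[X]) : Ideal.Quotient.mk I p = aeval (Ideal.Quotient.mk I X) p := by
    rw [← Ideal.Quotient.mkₐ_eq_mk ℤ, aeval_algHom_apply, aeval_X_left_apply]
  have hx : Ideal.Quotient.mk I X ^ (n + 1) = 0 := by
    rw [← map_pow, Ideal.Quotient.eq_zero_iff_dvd]
  have hdvd : X ^ (n + 1) ∣ cpDiffPoly a b m n * denomProdZ a b m n - numerProdZ a b m n := by
    rw [← Ideal.Quotient.eq_zero_iff_dvd, map_sub, sub_eq_zero, hmk, hmk (numerProdZ a b m n)]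
    exact aeval_cpDiffPoly_mul_denomProdZ hx ha hb hm
  intro k hk
  rw [← sub_eq_zero, ← coeff_sub]
  exact X_pow_dvd_iff.1 hdvd k (Nat.lt_succ_of_le hk)
end

section
/- For every nonnegative integer n, if (γ̃,σ̃) ∈ CP'_o(n), then f(γ̃,σ̃) ∈ CP'_e(n). -/
/-- `ℓ(γ)`: the largest part of `γ` (0 if `γ` is empty). -/
def lgPart (γ : Multiset ℕ) : ℕ := γ.sup

/-- `ℓ_e(γ)`: the largest even part of `γ` (0 if `γ` has no even part). -/
def lgEvenPart (γ : Multiset ℕ) : ℕ := (γ.filter (fun x => x % 2 = 0)).sup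

/-- `s(σ)`: the smallest part of `σ` (0 if `σ` is empty). -/
noncomputable def smPart (σ : Multiset ℕ) : ℕ := sInf {x | x ∈ σ}

/-- `o(γ)`: the unique part size of `γ` occurring an odd number of times
(0 if no part size occurs an odd number of times). -/
noncomputable def oddPart (γ : Multiset ℕ) : ℕ := sInf {x | x ∈ γ ∧ Odd (γ.count x)}

/-- `CP'(n)`: pairs `(γ̃, σ̃)` of partitions with `|γ̃| + |σ̃| = n` such that every part of
`σ̃` is odd, if `σ̃` is nonempty then `s(σ̃) ≥ ℓ(γ̃) + ℓ_e(γ̃)`, at most one part size of `γ̃`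
occurs an odd number of times, and any such part size equals `ℓ(γ̃)` or `ℓ_e(γ̃)`. -/
def CPgen (n : ℕ) : Set (Multiset ℕ × Multiset ℕ) :=
  {p | (∀ x ∈ p.1, 0 < x) ∧ (∀ x ∈ p.2, Odd x) ∧ p.1.sum + p.2.sum = n ∧
       (p.2 ≠ 0 → lgPart p.1 + lgEvenPart p.1 ≤ smPart p.2) ∧
       (∀ x ∈ p.1, ∀ y ∈ p.1, Odd (p.1.count x) → Odd (p.1.count y) → x = y) ∧
       (∀ x ∈ p.1, Odd (p.1.count x) → x = lgPart p.1 ∨ x = lgEvenPart p.1)}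

/-- `CP'_o(n)`: pairs in `CP'(n)` for which `ℓ(γ̃)` is odd and occurs an odd number of
times in `γ̃`. -/
def CPgenOdd (n : ℕ) : Set (Multiset ℕ × Multiset ℕ) :=
  {p ∈ CPgen n | Odd (lgPart p.1) ∧ Odd (p.1.count (lgPart p.1))}

/-- `CP'_e(n)`: pairs in `CP'(n)` for which every part size of `γ̃` occurring an odd number
of times equals `ℓ_e(γ̃)`. -/
def CPgenEven (n : ℕ) : Set (Multiset ℕ × Multiset ℕ) :=
  {p ∈ CPgen n | ∀ x ∈ p.1, Odd (p.1.count x) → x = lgEvenPart p.1}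

/-- The map `f`: remove one copy of `ℓ(γ̃)` from `γ̃` and, if `ℓ_e(γ̃) > 0`, also one copy of
`ℓ_e(γ̃)`; add one part of size `ℓ(γ̃) + ℓ_e(γ̃)` to `σ̃`. -/
def fMap (p : Multiset ℕ × Multiset ℕ) : Multiset ℕ × Multiset ℕ :=
  (if 0 < lgEvenPart p.1 then (p.1.erase (lgPart p.1)).erase (lgEvenPart p.1)
   else p.1.erase (lgPart p.1),
   (lgPart p.1 + lgEvenPart p.1) ::ₘ p.2)

/-- Add a part of size `x` to `μ`, discarding it if it has size 0. -/
def addPos (x : ℕ) (μ : Multiset ℕ) : Multiset ℕ := if 0 < x then x ::ₘ μ else μ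

/-- The map `g`: remove one copy of `s(σ̃)` from `σ̃`; add one part of size `o(γ̃)` and one
part of size `s(σ̃) − o(γ̃)` to `γ̃`, parts of size 0 being discarded. -/
noncomputable def gMap (p : Multiset ℕ × Multiset ℕ) : Multiset ℕ × Multiset ℕ :=
  (addPos (oddPart p.1) (addPos (smPart p.2 - oddPart p.1) p.1), p.2.erase (smPart p.2))
/-!
Since `ℓ(γ̃)` is odd and `ℓ_e(γ̃)` is even, they are distinct, so `f` lowers the multiplicity
of `ℓ(γ̃)` by one, making it even, and changes no multiplicity other than those of `ℓ(γ̃)` and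
`ℓ_e(γ̃)`. As `ℓ(γ̃)` was the only part size of odd multiplicity, afterwards only `ℓ_e(γ̃)` can
have odd multiplicity, and if it does it is still present, hence still the largest even part.
The new part `ℓ(γ̃) + ℓ_e(γ̃)` of `σ̃` is odd and, since removing parts can only decrease `ℓ` and
`ℓ_e`, it is at least `ℓ + ℓ_e` of the new `γ̃`.
-/

theorem Multiset.sup_mem_of_ne_bot {α : Type*} [LinearOrder α] [OrderBot α] {s : Multiset α}
    (h : s.sup ≠ ⊥) : s.sup ∈ s := by
  induction s using Multiset.induction_on with
  | empty => simp at h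
  | cons a s ih =>
    rw [Multiset.sup_cons] at h ⊢
    rcases max_choice a s.sup with hmax | hmax
    · rw [hmax]
      exact Multiset.mem_cons_self a s
    · rw [hmax] at h ⊢
      exact Multiset.mem_cons_of_mem (ih h)

section Parts

variable {γ δ : Multiset ℕ}

theorem lgPart_mem (h : lgPart γ ≠ 0) : lgPart γ ∈ γ :=
  Multiset.sup_mem_of_ne_bot h

theorem lgEvenPart_mem (h : lgEvenPart γ ≠ 0) : lgEvenPart γ ∈ γ :=
  Multiset.mem_of_mem_filter (Multiset.sup_mem_of_ne_bot h)

theorem lgEvenPart_even (γ : Multiset ℕ) : Even (lgEvenPart γ) := by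
  by_cases h : lgEvenPart γ = 0
  · simp [h]
  · exact Nat.even_iff.mpr (Multiset.of_mem_filter (p := (· % 2 = 0))
      (Multiset.sup_mem_of_ne_bot h))

theorem lgPart_ne_lgEvenPart (h : Odd (lgPart γ)) : lgPart γ ≠ lgEvenPart γ :=
  fun e => Nat.not_even_iff_odd.mpr h (e ▸ lgEvenPart_even γ)

theorem lgPart_mono (h : δ ≤ γ) : lgPart δ ≤ lgPart γ :=
  Multiset.sup_mono (Multiset.subset_of_le h)

theorem lgEvenPart_mono (h : δ ≤ γ) : lgEvenPart δ ≤ lgEvenPart γ :=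
  Multiset.sup_mono (Multiset.subset_of_le (Multiset.filter_le_filter _ h))

theorem le_smPart_cons {a : ℕ} {σ : Multiset ℕ} (h : σ ≠ 0 → a ≤ smPart σ) :
    a ≤ smPart (a ::ₘ σ) := by
  refine le_csInf ⟨a, Multiset.mem_cons_self a σ⟩ fun y hy => ?_
  rcases Multiset.mem_cons.mp hy with rfl | hy
  · exact le_rfl
  · exact (h (ne_of_mem_of_not_mem' hy (Multiset.notMem_zero y))).trans (Nat.sInf_le hy)

end Parts

section FMap

variable {p : Multiset ℕ × Multiset ℕ}

theorem fMap_fst_le (p : Multiset ℕ × Multiset ℕ) : (fMap p).1 ≤ p.1 := by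
  unfold fMap
  split_ifs
  · exact (Multiset.erase_le _ _).trans (Multiset.erase_le _ _)
  · exact Multiset.erase_le _ _

theorem count_fMap_fst_of_ne {x : ℕ} (hL : x ≠ lgPart p.1) (hE : x ≠ lgEvenPart p.1) :
    (fMap p).1.count x = p.1.count x := by
  unfold fMap
  split_ifs <;> simp only [Multiset.count_erase_of_ne hL, Multiset.count_erase_of_ne hE]

theorem count_fMap_fst_lgPart (h : lgPart p.1 ≠ lgEvenPart p.1) :
    (fMap p).1.count (lgPart p.1) = p.1.count (lgPart p.1) - 1 := by
  unfold fMap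
  split_ifs <;> simp only [Multiset.count_erase_of_ne h, Multiset.count_erase_self]

theorem sum_fMap (hL : Odd (lgPart p.1)) :
    (fMap p).1.sum + (fMap p).2.sum = p.1.sum + p.2.sum := by
  have hLmem := lgPart_mem hL.pos.ne'
  have hsumL := Multiset.sum_erase hLmem
  unfold fMap
  split_ifs with hE
  · have hEmem : lgEvenPart p.1 ∈ p.1.erase (lgPart p.1) :=
      (Multiset.mem_erase_of_ne (lgPart_ne_lgEvenPart hL).symm).mpr (lgEvenPart_mem hE.ne')
    have hsumE := Multiset.sum_erase hEmem
    simp only [Multiset.sum_cons]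
    omega
  · simp only [Multiset.sum_cons]
    omega

theorem lgPart_add_lgEvenPart_fMap_le
    (h : p.2 ≠ 0 → lgPart p.1 + lgEvenPart p.1 ≤ smPart p.2) :
    lgPart (fMap p).1 + lgEvenPart (fMap p).1 ≤ smPart (fMap p).2 :=
  calc lgPart (fMap p).1 + lgEvenPart (fMap p).1
      ≤ lgPart p.1 + lgEvenPart p.1 :=
        add_le_add (lgPart_mono (fMap_fst_le p)) (lgEvenPart_mono (fMap_fst_le p))
    _ ≤ smPart (fMap p).2 := le_smPart_cons h

theorem eq_lgEvenPart_of_odd_count_fMap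
    (honly : ∀ x ∈ p.1, Odd (p.1.count x) → x = lgPart p.1)
    (hL : Odd (lgPart p.1)) (hLc : Odd (p.1.count (lgPart p.1)))
    {x : ℕ} (hx : x ∈ (fMap p).1) (hxc : Odd ((fMap p).1.count x)) :
    x = lgEvenPart (fMap p).1 := by
  have hxL : x ≠ lgPart p.1 := by
    rintro rfl
    rw [count_fMap_fst_lgPart (lgPart_ne_lgEvenPart hL)] at hxc
    exact Nat.not_odd_iff_even.mpr (Nat.Odd.sub_odd hLc odd_one) hxc
  have hxE : x = lgEvenPart p.1 := by
    by_contra hxE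
    rw [count_fMap_fst_of_ne hxL hxE] at hxc
    exact hxL (honly x (Multiset.mem_of_le (fMap_fst_le p) hx) hxc)
  refine le_antisymm (Multiset.le_sup (Multiset.mem_filter.mpr ⟨hx, ?_⟩)) ?_
  · exact Nat.even_iff.mp (hxE ▸ lgEvenPart_even p.1)
  · exact hxE ▸ lgEvenPart_mono (fMap_fst_le p)

end FMap

theorem stmt4 (n : ℕ) (p : Multiset ℕ × Multiset ℕ) (hp : p ∈ CPgenOdd n) :
    fMap p ∈ CPgenEven n := by
  obtain ⟨⟨hpos, hodd, hsum, hsm, huniq, -⟩, hL, hLc⟩ := hp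
  have hLmem := lgPart_mem hL.pos.ne'
  have hkey : ∀ x ∈ (fMap p).1, Odd ((fMap p).1.count x) → x = lgEvenPart (fMap p).1 :=
    fun x hx => eq_lgEvenPart_of_odd_count_fMap
      (fun y hy hyc => huniq y hy _ hLmem hyc hLc) hL hLc hx
  have hσ : ∀ x ∈ (fMap p).2, Odd x := by
    intro x hx
    rcases Multiset.mem_cons.mp hx with rfl | hx
    · exact hL.add_even (lgEvenPart_even p.1)
    · exact hodd x hx
  refine ⟨⟨fun x hx => hpos x (Multiset.mem_of_le (fMap_fst_le p) hx), hσ,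
    (sum_fMap hL).trans hsum, fun _ => lgPart_add_lgEvenPart_fMap_le hsm, ?_,
    fun x hx hxc => Or.inr (hkey x hx hxc)⟩, hkey⟩
  exact fun x hx y hy hxc hyc => (hkey x hx hxc).trans (hkey y hy hyc).symm
end

section
/- For every nonnegative integer n, if (γ̃,σ̃) ∈ CP'_o(n) with σ̃ nonempty and s(σ̃) < 2ℓ(γ̃), then g(γ̃,σ̃) ∈ CP'_e(n) and, writing g(γ̃,σ̃) = (γ̃_g,σ̃_g), one has ℓ(γ̃_g) > ℓ_e(γ̃_g). -/
/-!
Write `ℓ = ℓ(γ̃)` and `s = s(σ̃)`. Since `ℓ` is the unique part size of odd multiplicity,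
`o(γ̃) = ℓ`, so `g` adds to `γ̃` a copy of `ℓ`, after which every multiplicity is even, and a part
`d = s - ℓ`. As `s` and `ℓ` are odd, `d` is even, and `ℓ_e(γ̃) ≤ d < ℓ` by the two inequalities on
`s`. Hence `ℓ(γ̃_g) = ℓ`, `ℓ_e(γ̃_g) = d`, only `d` can have odd multiplicity, and
`ℓ(γ̃_g) + ℓ_e(γ̃_g) = s` is at most every remaining part of `σ̃_g`.
-/

open Multiset

lemma sum_addPos (x : ℕ) (μ : Multiset ℕ) : (addPos x μ).sum = x + μ.sum := by
  unfold addPos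
  split_ifs with hx
  · exact sum_cons x μ
  · rw [Nat.eq_zero_of_not_pos hx, zero_add]

lemma addPos_cons (x y : ℕ) (μ : Multiset ℕ) : addPos x (y ::ₘ μ) = y ::ₘ addPos x μ := by
  unfold addPos
  split_ifs
  · exact cons_swap x y μ
  · rfl

lemma pos_of_mem_addPos {x y : ℕ} {μ : Multiset ℕ} (hμ : ∀ z ∈ μ, 0 < z)
    (hx : x ∈ addPos y μ) : 0 < x := by
  unfold addPos at hx
  split_ifs at hx with hy
  · rcases mem_cons.mp hx with rfl | hx
    exacts [hy, hμ x hx]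
  · exact hμ x hx

lemma count_addPos_of_ne {x y : ℕ} (μ : Multiset ℕ) (h : x ≠ y) :
    (addPos y μ).count x = μ.count x := by
  unfold addPos
  split_ifs
  · exact count_cons_of_ne h μ
  · rfl

lemma eq_of_odd_count_addPos {x y : ℕ} {μ : Multiset ℕ} (hμ : ∀ z, Even (μ.count z))
    (hx : Odd ((addPos y μ).count x)) : x = y := by
  by_contra h
  rw [count_addPos_of_ne μ h] at hx
  exact Nat.not_even_iff_odd.mpr hx (hμ x)

lemma lgPart_cons (x : ℕ) (μ : Multiset ℕ) : lgPart (x ::ₘ μ) = max x (lgPart μ) :=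
  sup_cons x μ

lemma lgPart_addPos (x : ℕ) (μ : Multiset ℕ) : lgPart (addPos x μ) = max x (lgPart μ) := by
  unfold addPos
  split_ifs with hx
  · exact lgPart_cons x μ
  · rw [Nat.eq_zero_of_not_pos hx, Nat.zero_max]

lemma lgEvenPart_cons_of_odd {x : ℕ} (hx : Odd x) (μ : Multiset ℕ) :
    lgEvenPart (x ::ₘ μ) = lgEvenPart μ := by
  rw [lgEvenPart, filter_cons_of_neg _ (Nat.odd_iff.mp hx ▸ one_ne_zero), lgEvenPart]

lemma lgEvenPart_addPos_of_even {x : ℕ} (hx : Even x) (μ : Multiset ℕ) :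
    lgEvenPart (addPos x μ) = max x (lgEvenPart μ) := by
  unfold addPos
  split_ifs with hpos
  · rw [lgEvenPart, filter_cons_of_pos (p := fun x => x % 2 = 0) _ (Nat.even_iff.mp hx),
      sup_cons, lgEvenPart]
  · rw [Nat.eq_zero_of_not_pos hpos, Nat.zero_max]

lemma smPart_mem {σ : Multiset ℕ} (h : σ ≠ 0) : smPart σ ∈ σ :=
  Nat.sInf_mem (exists_mem_of_ne_zero h)

lemma smPart_le {σ : Multiset ℕ} {x : ℕ} (h : x ∈ σ) : smPart σ ≤ x :=
  Nat.sInf_le h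

lemma smPart_le_smPart_erase {σ : Multiset ℕ} {a : ℕ} (h : σ.erase a ≠ 0) :
    smPart σ ≤ smPart (σ.erase a) :=
  smPart_le (mem_of_mem_erase (smPart_mem h))

lemma oddPart_eq_of_odd_count {γ : Multiset ℕ} {a : ℕ}
    (huniq : ∀ x ∈ γ, ∀ y ∈ γ, Odd (γ.count x) → Odd (γ.count y) → x = y)
    (ha : Odd (γ.count a)) : oddPart γ = a := by
  have ha_mem : a ∈ γ := count_pos.mp ha.pos
  have hmem := Nat.sInf_mem (s := {x | x ∈ γ ∧ Odd (γ.count x)}) ⟨a, ha_mem, ha⟩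
  exact huniq _ hmem.1 a ha_mem hmem.2 ha

lemma even_count_cons_of_odd_count {γ : Multiset ℕ} {a : ℕ}
    (huniq : ∀ x ∈ γ, ∀ y ∈ γ, Odd (γ.count x) → Odd (γ.count y) → x = y)
    (ha : Odd (γ.count a)) (x : ℕ) :
    Even ((a ::ₘ γ).count x) := by
  rcases eq_or_ne x a with rfl | hxa
  · rw [count_cons_self]
    exact ha.add_one
  · rw [count_cons_of_ne hxa]
    by_contra hx
    rw [Nat.not_even_iff_odd] at hx
    exact hxa (huniq x (count_pos.mp hx.pos) a (count_pos.mp ha.pos) hx ha)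

lemma gMap_eq_of_oddPart_pos {p : Multiset ℕ × Multiset ℕ} (h : 0 < oddPart p.1) :
    gMap p = (addPos (smPart p.2 - oddPart p.1) (oddPart p.1 ::ₘ p.1), p.2.erase (smPart p.2)) := by
  rw [gMap, addPos, if_pos h, addPos_cons]

lemma mem_CPgenEven {n : ℕ} {p : Multiset ℕ × Multiset ℕ} (hpos : ∀ x ∈ p.1, 0 < x)
    (hodd : ∀ x ∈ p.2, Odd x) (hsum : p.1.sum + p.2.sum = n)
    (hsm : p.2 ≠ 0 → lgPart p.1 + lgEvenPart p.1 ≤ smPart p.2)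
    (hcount : ∀ x ∈ p.1, Odd (p.1.count x) → x = lgEvenPart p.1) : p ∈ CPgenEven n :=
  ⟨⟨hpos, hodd, hsum, hsm,
    fun x hx y hy hcx hcy => (hcount x hx hcx).trans (hcount y hy hcy).symm,
    fun x hx hcx => Or.inr (hcount x hx hcx)⟩, hcount⟩

theorem stmt5 (n : ℕ) (p : Multiset ℕ × Multiset ℕ) (hp : p ∈ CPgenOdd n)
    (hσ : p.2 ≠ 0) (hs : smPart p.2 < 2 * lgPart p.1) :
    gMap p ∈ CPgenEven n ∧ lgEvenPart (gMap p).1 < lgPart (gMap p).1 := by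
  obtain ⟨γ, σ⟩ := p
  obtain ⟨⟨hpos, hodd, hsum, hsm, huniq, -⟩, hℓ_odd, hℓ_count⟩ := hp
  dsimp only at *
  have hop : oddPart γ = lgPart γ := oddPart_eq_of_odd_count huniq hℓ_count
  rw [gMap_eq_of_oddPart_pos (hop ▸ hℓ_odd.pos), hop]
  dsimp only
  set ℓ := lgPart γ
  set s := smPart σ
  have hs_mem : s ∈ σ := smPart_mem hσ
  have hs_ge : ℓ + lgEvenPart γ ≤ s := hsm hσ
  have hd_even : Even (s - ℓ) := Nat.Odd.sub_odd (hodd s hs_mem) hℓ_odd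
  have hlg : lgPart (addPos (s - ℓ) (ℓ ::ₘ γ)) = ℓ := by
    rw [lgPart_addPos, lgPart_cons, max_self]; omega
  have hlge : lgEvenPart (addPos (s - ℓ) (ℓ ::ₘ γ)) = s - ℓ := by
    rw [lgEvenPart_addPos_of_even hd_even, lgEvenPart_cons_of_odd hℓ_odd]; omega
  refine ⟨mem_CPgenEven ?_ (fun x hx => hodd x (mem_of_mem_erase hx)) ?_ ?_ ?_, ?_⟩
  · exact fun x => pos_of_mem_addPos (forall_mem_cons.mpr ⟨hℓ_odd.pos, hpos⟩)
  · dsimp only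
    rw [sum_addPos, sum_cons, ← hsum, ← sum_erase hs_mem]; omega
  · intro hne
    rw [hlg, hlge]
    exact (Nat.add_sub_cancel' (by omega)).trans_le (smPart_le_smPart_erase hne)
  · rw [hlge]
    exact fun x _ => eq_of_odd_count_addPos (even_count_cons_of_odd_count huniq hℓ_count)
  · rw [hlg, hlge]; omega
end

section
/- For every positive integer n, the number of partitions of n into even parts in which the largest part occurs an odd number of times and every other part size occurs an even number of times equals the number of partitions of n into odd parts in which every part size occurs an even number of times. -/
/-!
The bijection is conjugation. The parts of the conjugate `λ'` of `λ` are the numbers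
`c j = #{parts of λ exceeding j}` for `j < max λ`, and the multiplicity of `v > 0` in `λ` is
`c (v - 1) - c v`. Hence all multiplicities of `λ` are even iff every `c j` is even iff all parts
of `λ'` are even; and `λ` has odd multiplicity at its largest part and even multiplicities elsewhere
iff `c j` is odd for every `j < max λ`, i.e. iff all parts of `λ'` are odd. Since `λ'' = λ`,
conjugation exchanges the two families.
-/

namespace PartitionConjugate

open Multiset

def countGt (s : Multiset ℕ) (j : ℕ) : ℕ := s.countP (j < ·)

def conj (s : Multiset ℕ) : Multiset ℕ := (range s.sup).map (countGt s)

variable {s t : Multiset ℕ}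

lemma countGt_cons (a : ℕ) (s : Multiset ℕ) (j : ℕ) :
    countGt (a ::ₘ s) j = countGt s j + if j < a then 1 else 0 :=
  countP_cons _ _ _

lemma countGt_antitone (s : Multiset ℕ) : Antitone (countGt s) := fun i j hij => by
  simp only [countGt, countP_eq_card_filter]
  exact card_le_card (monotone_filter_right s fun x hx => lt_of_le_of_lt hij hx)

lemma countGt_pos_iff {j : ℕ} : 0 < countGt s j ↔ j < s.sup := by
  rw [countGt, countP_pos, ← not_le, Multiset.sup_le]
  push Not
  rfl

lemma countGt_eq_zero_of_sup_le {j : ℕ} (h : s.sup ≤ j) : countGt s j = 0 := by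
  by_contra hne
  exact absurd (countGt_pos_iff.1 (Nat.pos_of_ne_zero hne)) (not_lt.2 h)

lemma countGt_sub_one {v : ℕ} (hv : 0 < v) : countGt s (v - 1) = countGt s v + s.count v := by
  induction s using Multiset.induction_on with
  | empty => simp [countGt]
  | cons a s ih =>
    rw [countGt_cons, countGt_cons, count_cons, ih]
    split_ifs <;> omega

lemma count_eq_countGt_sub {v : ℕ} (hv : 0 < v) : s.count v = countGt s (v - 1) - countGt s v := by
  rw [countGt_sub_one hv]
  omega

lemma eq_of_countGt_eq (hs : ∀ x ∈ s, 0 < x) (ht : ∀ x ∈ t, 0 < x)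
    (h : countGt s = countGt t) : s = t := by
  ext v
  rcases Nat.eq_zero_or_pos v with rfl | hv
  · rw [count_eq_zero.2 fun h0 => (hs 0 h0).false, count_eq_zero.2 fun h0 => (ht 0 h0).false]
  · rw [count_eq_countGt_sub hv, count_eq_countGt_sub hv, h]

lemma lt_card_filter_range_iff {p : ℕ → Prop} [DecidablePred p] {L i : ℕ}
    (hp : ∀ ⦃i j⦄, i ≤ j → p j → p i) (hL : ∀ i, p i → i < L) :
    i < ((Finset.range L).filter p).card ↔ p i := by
  constructor
  · intro h
    by_contra hi
    have hsub : (Finset.range L).filter p ⊆ Finset.range i := fun k hk => by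
      rw [Finset.mem_filter] at hk
      exact Finset.mem_range.2 (lt_of_not_ge fun hik => hi (hp hik hk.2))
    simpa using h.trans_le (Finset.card_le_card hsub)
  · intro hi
    have hsub : Finset.range (i + 1) ⊆ (Finset.range L).filter p := fun k hk => by
      have hki : k ≤ i := Nat.lt_succ_iff.1 (Finset.mem_range.1 hk)
      exact Finset.mem_filter.2 ⟨Finset.mem_range.2 (hki.trans_lt (hL i hi)), hp hki hi⟩
    simpa using Finset.card_le_card hsub

lemma card_filter_lt_range {a N : ℕ} (h : a ≤ N) : ((Finset.range N).filter (· < a)).card = a :=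
  eq_of_forall_lt_iff fun _ =>
    lt_card_filter_range_iff (fun _ _ hij hj => hij.trans_lt hj) fun _ hi => hi.trans_le h

lemma countGt_conj (s : Multiset ℕ) (j : ℕ) :
    countGt (conj s) j = ((Finset.range s.sup).filter (j < countGt s ·)).card := by
  rw [countGt, conj, countP_map]
  rfl

lemma lt_countGt_conj_iff {i j : ℕ} : i < countGt (conj s) j ↔ j < countGt s i := by
  rw [countGt_conj]
  exact lt_card_filter_range_iff (fun _ _ hij hj => hj.trans_le (countGt_antitone s hij))
    fun i hi => countGt_pos_iff.1 (Nat.zero_lt_of_lt hi)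

lemma pos_of_mem_conj {x : ℕ} (hx : x ∈ conj s) : 0 < x := by
  obtain ⟨i, hi, rfl⟩ := mem_map.1 hx
  exact countGt_pos_iff.2 (mem_range.1 hi)

lemma conj_conj (hs : ∀ x ∈ s, 0 < x) : conj (conj s) = s :=
  eq_of_countGt_eq (fun _ => pos_of_mem_conj) hs <| funext fun _ =>
    eq_of_forall_lt_iff fun _ => lt_countGt_conj_iff.trans lt_countGt_conj_iff

lemma sum_range_countGt {N : ℕ} (hN : ∀ x ∈ s, x ≤ N) :
    ∑ j ∈ Finset.range N, countGt s j = s.sum := by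
  induction s using Multiset.induction_on with
  | empty => simp [countGt]
  | cons a s ih =>
    simp only [countGt_cons, Finset.sum_add_distrib, Finset.sum_boole, Nat.cast_id, sum_cons]
    rw [ih fun x hx => hN x (mem_cons_of_mem hx), card_filter_lt_range (hN a (mem_cons_self a s)),
      add_comm]

lemma sum_conj (s : Multiset ℕ) : (conj s).sum = s.sum :=
  sum_range_countGt fun _ => le_sup

lemma exists_mem_eq_sup {α : Type*} [LinearOrder α] [OrderBot α] {s : Multiset α} (hne : s ≠ 0) :
    ∃ a ∈ s, s.sup = a := by
  induction s using Multiset.induction_on with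
  | empty => exact absurd rfl hne
  | cons a s ih =>
    rcases eq_or_ne s 0 with rfl | hs
    · exact ⟨a, mem_cons_self a 0, by simp⟩
    obtain ⟨b, hb, hsup⟩ := ih hs
    rw [sup_cons, hsup]
    rcases le_total a b with hab | hab
    · exact ⟨b, mem_cons_of_mem hb, sup_of_le_right hab⟩
    · exact ⟨a, mem_cons_self a s, sup_of_le_left hab⟩

lemma even_countGt_of_forall_even_count (h : ∀ x ∈ s, Even (s.count x)) (j : ℕ) :
    Even (countGt s j) := by
  rw [countGt, countP_eq_card_filter, ← toFinset_sum_count_eq]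
  refine Finset.even_sum _ fun a ha => ?_
  obtain ⟨has, hja⟩ := mem_filter.1 (mem_toFinset.1 ha)
  rw [count_filter_of_pos hja]
  exact h a has

lemma forall_even_countGt_iff (hs : ∀ x ∈ s, 0 < x) :
    (∀ j, Even (countGt s j)) ↔ ∀ x ∈ s, Even (s.count x) := by
  refine ⟨fun h x hx => ?_, even_countGt_of_forall_even_count⟩
  rw [count_eq_countGt_sub (hs x hx), Nat.even_sub (countGt_antitone s (Nat.sub_le x 1))]
  exact iff_of_true (h _) (h _)

/-- Removing one copy of the largest part reduces this to `forall_even_countGt_iff`. -/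
lemma forall_odd_countGt_iff (hs : ∀ x ∈ s, 0 < x) (hne : s ≠ 0) :
    (∀ i < s.sup, Odd (countGt s i)) ↔
      Odd (s.count s.sup) ∧ ∀ x ∈ s, x ≠ s.sup → Even (s.count x) := by
  obtain ⟨L, hL, hsup⟩ := exists_mem_eq_sup hne
  rw [hsup]
  obtain ⟨t, rfl⟩ := exists_cons_of_mem hL
  have ht : ∀ x ∈ t, 0 < x := fun x hx => hs x (mem_cons_of_mem hx)
  have htL : t.sup ≤ L := hsup ▸ sup_mono (subset_cons t L)
  calc (∀ i < L, Odd (countGt (L ::ₘ t) i)) ↔ ∀ i, Even (countGt t i) := by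
        simp only [countGt_cons]
        refine ⟨fun h i => ?_, fun h i hi => by
          simpa [hi, Nat.odd_add_one, Nat.not_odd_iff_even] using h i⟩
        rcases lt_or_ge i L with hi | hi
        · simpa [hi, Nat.odd_add_one, Nat.not_odd_iff_even] using h i hi
        · rw [countGt_eq_zero_of_sup_le (htL.trans hi)]
          exact .zero
    _ ↔ ∀ x ∈ t, Even (t.count x) := forall_even_countGt_iff ht
    _ ↔ _ := by
        simp only [count_cons_self, Nat.odd_add_one, Nat.not_odd_iff_even, mem_cons]
        constructor
        · intro h
          refine ⟨?_, ?_⟩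
          · by_cases hLt : L ∈ t
            · exact h L hLt
            · rw [count_eq_zero.2 hLt]
              exact .zero
          · rintro x (rfl | hx) hxL
            · exact absurd rfl hxL
            · rw [count_cons_of_ne hxL]
              exact h x hx
        · rintro ⟨hLt, h⟩ x hx
          by_cases hxL : x = L
          · exact hxL ▸ hLt
          · simpa [count_cons_of_ne hxL] using h x (Or.inr hx) hxL

lemma forall_mem_conj_iff {p : ℕ → Prop} : (∀ x ∈ conj s, p x) ↔ ∀ i < s.sup, p (countGt s i) := by
  simp [conj]

lemma forall_even_mem_conj_iff : (∀ x ∈ conj s, Even x) ↔ ∀ j, Even (countGt s j) := by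
  rw [forall_mem_conj_iff]
  refine ⟨fun h j => ?_, fun h i _ => h i⟩
  rcases lt_or_ge j s.sup with hj | hj
  · exact h j hj
  · rw [countGt_eq_zero_of_sup_le hj]
    exact .zero

lemma forall_odd_mem_conj_iff (hs : ∀ x ∈ s, 0 < x) (hne : s ≠ 0) :
    (∀ x ∈ conj s, Odd x) ↔ Odd (s.count s.sup) ∧ ∀ x ∈ s, x ≠ s.sup → Even (s.count x) :=
  forall_mem_conj_iff.trans (forall_odd_countGt_iff hs hne)

lemma forall_even_count_conj_iff (hs : ∀ x ∈ s, 0 < x) :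
    (∀ x ∈ conj s, Even ((conj s).count x)) ↔ ∀ x ∈ s, Even x := by
  rw [← forall_even_countGt_iff fun _ => pos_of_mem_conj, ← forall_even_mem_conj_iff, conj_conj hs]

end PartitionConjugate

open PartitionConjugate in
theorem stmt12 (n : ℕ) (hn : 0 < n) :
    ({lam : Multiset ℕ | (∀ x ∈ lam, 0 < x ∧ Even x) ∧ lam.sum = n ∧
        Odd (lam.count lam.sup) ∧
        (∀ x ∈ lam, x ≠ lam.sup → Even (lam.count x))}).ncard =
    ({lam : Multiset ℕ | (∀ x ∈ lam, Odd x) ∧ lam.sum = n ∧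
        (∀ x ∈ lam, Even (lam.count x))}).ncard := by
  refine Set.BijOn.ncard_eq (f := conj) (Set.InvOn.bijOn (f' := conj) ⟨?_, ?_⟩ ?_ ?_)
  · rintro s ⟨hs, -⟩
    exact conj_conj fun x hx => (hs x hx).1
  · rintro t ⟨ht, -⟩
    exact conj_conj fun x hx => (ht x hx).pos
  · rintro s ⟨hs, hsum, htop, hrest⟩
    have hpos : ∀ x ∈ s, 0 < x := fun x hx => (hs x hx).1
    have hne : s ≠ 0 := by
      rintro rfl
      simp only [Multiset.sum_zero] at hsum
      omega
    exact ⟨(forall_odd_mem_conj_iff hpos hne).2 ⟨htop, hrest⟩, (sum_conj s).trans hsum,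
      (forall_even_count_conj_iff hpos).2 fun x hx => (hs x hx).2⟩
  · rintro t ⟨hodd, hsum, hcount⟩
    have hpos : ∀ x ∈ t, 0 < x := fun x hx => (hodd x hx).pos
    have hne : conj t ≠ 0 := by
      intro h
      have := sum_conj t
      rw [h, hsum, Multiset.sum_zero] at this
      omega
    refine ⟨fun x hx => ⟨pos_of_mem_conj hx, forall_even_mem_conj_iff.2
        ((forall_even_countGt_iff hpos).2 hcount) x hx⟩, (sum_conj t).trans hsum,
      (forall_odd_mem_conj_iff (fun _ => pos_of_mem_conj) hne).1 ?_⟩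
    rwa [conj_conj hpos]
end

section
/- Let a and b be positive integers and set m = a + b. Working in the field ℚ(X) of rational functions over ℚ, for nonnegative integers N, M define g(N,M) = (Π_{j=1}^{N+M−1} (1 + X^{mj})) / ((Π_{j=0}^{N−1} (1 + X^{a+mj})) · (Π_{j=0}^{M−1} (1 − X^{b+mj}))), where empty products equal 1. Then for all integers N ≥ 1 and M ≥ 1, g(N,M) = g(N,M−1) + X^{mM−a} · g(N−1,M). -/
/-- The finite product
`g_{a,b,m}(N,M) = (Π_{j=1}^{N+M−1} (1 + X^{mj})) /
  ((Π_{j=0}^{N−1} (1 + X^{a+mj})) · (Π_{j=0}^{M−1} (1 − X^{b+mj})))`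
as an element of the field `ℚ(X)` of rational functions, empty products being 1. -/
noncomputable def gFin (a b m N M : ℕ) : RatFunc ℚ :=
  (∏ j ∈ Finset.Icc 1 (N + M - 1), (1 + RatFunc.X ^ (m * j))) /
    ((∏ j ∈ Finset.range N, (1 + RatFunc.X ^ (a + m * j))) *
     (∏ j ∈ Finset.range M, (1 - RatFunc.X ^ (b + m * j))))

/-!
Write `u = X^(a+mn)` and `v = X^(b+mk)` for `N = n + 1`, `M = k + 1`. After cancelling the
factors common to all three quotients, the recursion reduces to the identity
`(1 + uv) / ((1 + u)(1 - v)) = 1 / (1 + u) + v / (1 - v)`, since `(1 - v) + v(1 + u) = 1 + uv`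
and `uv = X^(m(n+k+1))` when `m = a + b`.
-/

open Finset

namespace RatFunc

variable {K : Type*} [Field K]

theorem one_add_X_pow_ne_zero {k : ℕ} (hk : 0 < k) : (1 + X ^ k : RatFunc K) ≠ 0 := by
  have h := algebraMap_ne_zero (Polynomial.X_pow_add_C_ne_zero hk (1 : K))
  simpa [algebraMap_X, add_comm] using h

theorem one_sub_X_pow_ne_zero {k : ℕ} (hk : 0 < k) : (1 - X ^ k : RatFunc K) ≠ 0 := by
  have h := algebraMap_ne_zero (Polynomial.X_pow_sub_C_ne_zero hk (1 : K))
  rw [← neg_ne_zero, neg_sub]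
  simpa [algebraMap_X] using h

end RatFunc

theorem mul_one_add_mul_div_eq {F : Type*} [Field F] {u v : F} (hu : 1 + u ≠ 0) (hv : 1 - v ≠ 0)
    (c : F) : c * ((1 + u * v) / ((1 + u) * (1 - v))) = c / (1 + u) + v * (c / (1 - v)) := by
  field_simp
  ring

/-- The part of `gFin a b m (n + 1) (k + 1)` shared with `gFin a b m (n + 1) k` and
`gFin a b m n (k + 1)`. -/
noncomputable def gFinCore (a b m n k : ℕ) : RatFunc ℚ :=
  (∏ j ∈ Icc 1 (n + k), (1 + RatFunc.X ^ (m * j))) /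
    ((∏ j ∈ range n, (1 + RatFunc.X ^ (a + m * j))) *
     (∏ j ∈ range k, (1 - RatFunc.X ^ (b + m * j))))

section gFin

variable (a b m n k : ℕ)

theorem gFin_succ_succ : gFin a b m (n + 1) (k + 1) = gFinCore a b m n k *
    ((1 + RatFunc.X ^ (m * (n + k + 1))) /
      ((1 + RatFunc.X ^ (a + m * n)) * (1 - RatFunc.X ^ (b + m * k)))) := by
  rw [gFin, gFinCore, show n + 1 + (k + 1) - 1 = n + k + 1 by omega,
    prod_Icc_succ_top (by omega), prod_range_succ, prod_range_succ, div_mul_div_comm]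
  ring_nf

theorem gFin_succ_left :
    gFin a b m (n + 1) k = gFinCore a b m n k / (1 + RatFunc.X ^ (a + m * n)) := by
  rw [gFin, gFinCore, show n + 1 + k - 1 = n + k by omega, prod_range_succ, div_div]
  ring_nf

theorem gFin_succ_right :
    gFin a b m n (k + 1) = gFinCore a b m n k / (1 - RatFunc.X ^ (b + m * k)) := by
  rw [gFin, gFinCore, show n + (k + 1) - 1 = n + k by omega, prod_range_succ, div_div]
  ring_nf

end gFin

theorem stmt19 (a b : ℕ) (ha : 0 < a) (hb : 0 < b) (N M : ℕ) (hN : 1 ≤ N) (hM : 1 ≤ M) :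
    gFin a b (a + b) N M =
      gFin a b (a + b) N (M - 1) +
        RatFunc.X ^ ((a + b) * M - a) * gFin a b (a + b) (N - 1) M := by
  obtain ⟨n, rfl⟩ : ∃ n, N = n + 1 := ⟨N - 1, by omega⟩
  obtain ⟨k, rfl⟩ : ∃ k, M = k + 1 := ⟨M - 1, by omega⟩
  have hexp : (a + b) * (k + 1) - a = b + (a + b) * k := by
    rw [mul_add_one]; omega
  have hsplit : (a + b) * (n + k + 1) = (a + (a + b) * n) + (b + (a + b) * k) := by ring
  rw [Nat.add_sub_cancel, Nat.add_sub_cancel, hexp, gFin_succ_succ, gFin_succ_left,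
    gFin_succ_right, hsplit, pow_add]
  exact mul_one_add_mul_div_eq (RatFunc.one_add_X_pow_ne_zero (by omega))
    (RatFunc.one_sub_X_pow_ne_zero (by omega)) _
end
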